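/- arXiv:2511.06218 — 7 statements merged into one kernel-verified Lean document; each statement's English description precedes it below -/
import Mathlib

section
/- For any number of groups k ≥ 2, any positive group sizes n_1, …, n_k summing to n, any set M of m goods, and any monotone normalized utility functions for the n agents, there exists an EF1 outcome: a partition of the agents into groups C_1, …, C_k with |C_i| = n_i together with a partition of M into bundles A_1, …, A_k such that for every i, j ∈ [k] and every agent a ∈ C_i there exists a set B ⊆ A_j with |B| ≤ 1 and u_a(A_i) ≥ u_a(A_j \ B). -/
open Finset

section EF1Aux

variable {k n : ℕ} {M : Type*} [Fintype M] [DecidableEq M]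

/-- Existence of an assignment with prescribed fiber sizes. -/
lemma ef1_exists_c0 (k : ℕ) : ∀ (nsize : Fin (k + 1) → ℕ) (s : Finset (Fin n)),
    (∑ i, nsize i = s.card) →
    ∃ c : Fin n → Fin (k + 1), ∀ i, (s.filter fun a => c a = i).card = nsize i := by
  induction k with
  | zero =>
      intro nsize s hsum
      refine ⟨fun _ => 0, fun i => ?_⟩
      have hi : i = 0 := Fin.ext (by have := i.isLt; omega)
      subst hi
      have htrue : ∀ a ∈ s, (fun _ : Fin n => (0 : Fin (0 + 1))) a = 0 := fun _ _ => rfl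
      rw [Finset.filter_true_of_mem htrue, ← hsum, Fin.sum_univ_one]
  | succ k ih =>
      intro nsize s hsum
      have h0 : nsize 0 ≤ s.card := by
        rw [← hsum]
        exact Finset.single_le_sum (fun i _ => Nat.zero_le _) (mem_univ 0)
      obtain ⟨T, hTs, hT⟩ := Finset.exists_subset_card_eq h0
      have hsum' : ∑ i : Fin (k + 1), nsize i.succ = (s \ T).card := by
        rw [card_sdiff_of_subset hTs, hT]
        rw [Fin.sum_univ_succ] at hsum
        omega
      obtain ⟨c', hc'⟩ := ih (fun i : Fin (k + 1) => nsize i.succ) (s \ T) hsum'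
      refine ⟨fun a => if a ∈ T then 0 else (c' a).succ, fun i => ?_⟩
      rcases Fin.eq_zero_or_eq_succ i with rfl | ⟨j, rfl⟩
      · have : (s.filter fun a => (if a ∈ T then 0 else (c' a).succ) = 0) = T := by
          ext a
          simp only [mem_filter]
          constructor
          · rintro ⟨has, hif⟩
            by_contra haT
            rw [if_neg haT] at hif
            exact Fin.succ_ne_zero _ hif
          · intro haT
            exact ⟨hTs haT, by rw [if_pos haT]⟩
        rw [this, hT]
      · have : (s.filter fun a => (if a ∈ T then 0 else (c' a).succ) = j.succ)
            = ((s \ T).filter fun a => c' a = j) := by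
          ext a
          simp only [mem_filter, mem_sdiff]
          constructor
          · rintro ⟨has, hif⟩
            by_cases haT : a ∈ T
            · rw [if_pos haT] at hif
              exact absurd hif.symm (Fin.succ_ne_zero _)
            · rw [if_neg haT] at hif
              exact ⟨⟨has, haT⟩, Fin.succ_injective _ hif⟩
          · rintro ⟨⟨has, haT⟩, hc⟩
            exact ⟨has, by rw [if_neg haT, hc]⟩
        rw [this, hc' j]

variable (u : Fin n → Finset M → ℝ)

/-- Rotation lemma: among size-respecting EF1 assignments for fixed bundles `F`,
there is one under which some bundle is unenvied by every agent. -/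
lemma ef1_improve (hk : 2 ≤ k) (nsize : Fin k → ℕ)
    (F : Fin k → Finset M) (c0 : Fin n → Fin k)
    (hsz0 : ∀ i, (univ.filter fun a => c0 a = i).card = nsize i)
    (hef0 : ∀ a j, ∃ B ⊆ F j, B.card ≤ 1 ∧ u a (F j \ B) ≤ u a (F (c0 a))) :
    ∃ c : Fin n → Fin k,
      (∀ i, (univ.filter fun a => c a = i).card = nsize i) ∧
      (∀ a j, ∃ B ⊆ F j, B.card ≤ 1 ∧ u a (F j \ B) ≤ u a (F (c a))) ∧
      ∃ jj : Fin k, ∀ a, u a (F jj) ≤ u a (F (c a)) := by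
  classical
  set Good : (Fin n → Fin k) → Prop := fun c =>
    (∀ i, (univ.filter fun a => c a = i).card = nsize i) ∧
    (∀ a j, ∃ B ⊆ F j, B.card ≤ 1 ∧ u a (F j \ B) ≤ u a (F (c a))) with hGoodDef
  set S : Finset (Fin n → Fin k) := univ.filter Good with hSdef
  have hne : S.Nonempty := ⟨c0, by simp [hSdef, hGoodDef]; exact ⟨hsz0, hef0⟩⟩
  obtain ⟨c, hcS, hmax⟩ := Finset.exists_max_image S (fun c => ∑ a, u a (F (c a))) hne
  have hGoodc : Good c := (mem_filter.mp hcS).2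
  refine ⟨c, hGoodc.1, hGoodc.2, ?_⟩
  by_contra hno
  push_neg at hno
  choose α hα using hno
  set h : Fin k → Fin k := fun j => c (α j) with hhdef
  -- find a periodic point of `h`
  have hz : ∃ x : Fin k, ∃ d, 0 < d ∧ h^[d] x = x := by
    have hkpos : 0 < k := by omega
    set z : Fin k := ⟨0, hkpos⟩
    obtain ⟨i, hi, j, hj, hij, hfij⟩ :=
      Finset.exists_ne_map_eq_of_card_lt_of_maps_to
        (s := Finset.range (k + 1)) (t := (univ : Finset (Fin k)))
        (by simp) (fun a _ => mem_univ (h^[a] z))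
    rcases hij.lt_or_gt with hlt | hlt
    · exact ⟨h^[i] z, j - i, by omega, by
        rw [← Function.iterate_add_apply]
        rw [show j - i + i = j from by omega, hfij]⟩
    · exact ⟨h^[j] z, i - j, by omega, by
        rw [← Function.iterate_add_apply]
        rw [show i - j + j = i from by omega, ← hfij]⟩
  obtain ⟨x, d, hd0, hdx⟩ := hz
  set D : ℕ := Function.minimalPeriod h x with hDdef
  have hper : Function.IsPeriodicPt h d x := hdx
  have hD0 : 0 < D := hper.minimalPeriod_pos hd0
  have hDx : h^[D] x = x := Function.isPeriodicPt_minimalPeriod h x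
  set y : ℕ → Fin k := fun t => h^[t] x with hydef
  have yper : ∀ t, y (t + D) = y t := by
    intro t
    simp only [hydef, Function.iterate_add_apply, hDx]
  have yinj : ∀ s t, s < D → t < D → y s = y t → s = t := by
    have key : ∀ s t, s < t → t < D → y s = y t → False := by
      intro s t hst htD hyeq
      have hper2 : Function.IsPeriodicPt h (D - t + s) x := by
        show h^[D - t + s] x = x
        rw [Function.iterate_add_apply]
        change h^[D - t] (y s) = x
        rw [hyeq]
        change h^[D - t] (h^[t] x) = x
        rw [← Function.iterate_add_apply, show D - t + t = D from by omega, hDx]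
      have := hper2.minimalPeriod_le (by omega)
      omega
    intro s t hs ht hyeq
    rcases lt_trichotomy s t with h1 | h1 | h1
    · exact absurd hyeq (fun hyeq => key s t h1 ht hyeq)
    · exact h1
    · exact absurd hyeq.symm (fun hyeq => key t s h1 hs hyeq)
  have ymod : ∀ t, t ≤ D → y (t % D) = y t := by
    intro t ht
    rcases eq_or_lt_of_le ht with rfl | hlt
    · rw [Nat.mod_self]
      have h0 := yper 0
      rw [Nat.zero_add] at h0
      exact h0.symm
    · rw [Nat.mod_eq_of_lt hlt]
  set β : ℕ → Fin n := fun t => α (y t) with hβdef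
  have hβgroup : ∀ t, c (β t) = y (t + 1) := by
    intro t
    show h (y t) = y (t + 1)
    exact (Function.iterate_succ_apply' h t x).symm
  have hβenvy : ∀ t, u (β t) (F (c (β t))) < u (β t) (F (y t)) := fun t => hα (y t)
  have βinj : ∀ s t, s < D → t < D → β s = β t → s = t := by
    intro s t hs ht hβeq
    have h1 : y (s + 1) = y (t + 1) := by
      rw [← hβgroup s, ← hβgroup t, hβeq]
    have h2 : y ((s + 1) % D) = y ((t + 1) % D) := by
      rw [ymod _ (by omega), ymod _ (by omega), h1]
    have h3 : (s + 1) % D = (t + 1) % D :=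
      yinj _ _ (Nat.mod_lt _ hD0) (Nat.mod_lt _ hD0) h2
    rcases eq_or_lt_of_le (show s + 1 ≤ D from by omega) with hs1 | hs1 <;>
      rcases eq_or_lt_of_le (show t + 1 ≤ D from by omega) with ht1 | ht1
    · omega
    · rw [hs1, Nat.mod_self, Nat.mod_eq_of_lt ht1] at h3; omega
    · rw [ht1, Nat.mod_self, Nat.mod_eq_of_lt hs1] at h3; omega
    · rw [Nat.mod_eq_of_lt hs1, Nat.mod_eq_of_lt ht1] at h3; omega
  set l : List (Fin n) := (List.range D).map (fun s => β (D - 1 - s)) with hldef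
  have hlen : l.length = D := by simp [hldef]
  have hlget : ∀ s (hs : s < l.length), l[s] = β (D - 1 - s) := by
    intro s hs
    simp [hldef]
  have hnodup : l.Nodup := by
    refine List.Nodup.map_on ?_ (List.nodup_range (n := D))
    intro s hs t ht hbeq
    rw [List.mem_range] at hs ht
    have := βinj _ _ (by omega) (by omega) hbeq
    omega
  set τ : Equiv.Perm (Fin n) := l.formPerm with hτdef
  set c' : Fin n → Fin k := fun a => c (τ a) with hc'def
  have hmove : ∀ t, t < D → c' (β t) = y t := by
    intro t ht
    have hidx : D - 1 - t < l.length := by omega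
    have h1 : β t = l[D - 1 - t] := by
      rw [hlget _ hidx]
      congr 1
      omega
    have h2 : τ (β t) = l[(D - 1 - t + 1) % l.length]'(Nat.mod_lt _ (by omega)) := by
      rw [h1, hτdef]
      exact List.formPerm_apply_getElem l hnodup _ hidx
    rcases Nat.eq_zero_or_pos t with rfl | htpos
    · have hmod : (D - 1 - 0 + 1) % l.length = 0 := by
        rw [hlen]; simp only [Nat.sub_zero]
        rw [show D - 1 + 1 = D from by omega, Nat.mod_self]
      show c (τ (β 0)) = y 0
      rw [h2]
      have h3 : l[(D - 1 - 0 + 1) % l.length]'(Nat.mod_lt _ (by omega)) = β (D - 1) := by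
        have := hlget ((D - 1 - 0 + 1) % l.length) (Nat.mod_lt _ (by omega))
        rw [this]
        congr 1
        rw [hmod]
        omega
      rw [h3, hβgroup]
      rw [show D - 1 + 1 = D from by omega]
      have := yper 0
      simpa using this
    · have hmod : (D - 1 - t + 1) % l.length = D - t := by
        rw [hlen]
        rw [show D - 1 - t + 1 = D - t from by omega]
        exact Nat.mod_eq_of_lt (by omega)
      show c (τ (β t)) = y t
      rw [h2]
      have h3 : l[(D - 1 - t + 1) % l.length]'(Nat.mod_lt _ (by omega)) = β (t - 1) := by
        have := hlget ((D - 1 - t + 1) % l.length) (Nat.mod_lt _ (by omega))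
        rw [this]
        congr 1
        rw [hmod]
        omega
      rw [h3, hβgroup]
      congr 1
      omega
  have himp : ∀ a, u a (F (c a)) ≤ u a (F (c' a)) := by
    intro a
    by_cases hal : a ∈ l
    · obtain ⟨s, hs, hsa⟩ := List.mem_iff_getElem.mp hal
      have hsD : s < D := by rwa [hlen] at hs
      have haβ : a = β (D - 1 - s) := by rw [← hsa, hlget _ hs]
      rw [haβ, hmove _ (by omega)]
      exact le_of_lt (by simpa using hβenvy (D - 1 - s))
    · have : τ a = a := List.formPerm_apply_of_notMem hal
      rw [hc'def]
      simp only [this]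
      exact le_refl _
  have hstrict : u (β 0) (F (c (β 0))) < u (β 0) (F (c' (β 0))) := by
    rw [hmove 0 hD0]
    exact hβenvy 0
  have hsum_lt : ∑ a, u a (F (c a)) < ∑ a, u a (F (c' a)) :=
    Finset.sum_lt_sum (fun a _ => himp a) ⟨β 0, mem_univ _, hstrict⟩
  have hc'S : c' ∈ S := by
    rw [hSdef, mem_filter]
    refine ⟨mem_univ _, ?_, ?_⟩
    · intro i
      have himg : (univ.filter fun a => c' a = i)
          = (univ.filter fun a => c a = i).image τ.symm := by
        ext b
        simp only [mem_filter, mem_univ, true_and, mem_image, hc'def]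
        constructor
        · intro hb
          exact ⟨τ b, hb, by simp⟩
        · rintro ⟨a, ha, rfl⟩
          simpa using ha
      rw [himg, Finset.card_image_of_injective _ τ.symm.injective]
      exact hGoodc.1 i
    · intro a j
      obtain ⟨B, hB, hBcard, hBle⟩ := hGoodc.2 a j
      exact ⟨B, hB, hBcard, le_trans hBle (himp a)⟩
  have := hmax c' hc'S
  linarith

/-- Main induction: for any duplicate-free list of goods, an EF1 outcome exists
for the goods in the list. -/
lemma ef1_list (hk : 2 ≤ k) (nsize : Fin k → ℕ) (hsum : ∑ i, nsize i = n)
    (hmono : ∀ (a : Fin n) (S T : Finset M), S ⊆ T → u a S ≤ u a T) :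
    ∀ L : List M, L.Nodup →
    ∃ (c : Fin n → Fin k) (alloc : M → Fin k),
      (∀ i, (univ.filter fun a => c a = i).card = nsize i) ∧
      (∀ a j, ∃ B ⊆ L.toFinset.filter (fun g => alloc g = j), B.card ≤ 1 ∧
        u a (L.toFinset.filter (fun g => alloc g = j) \ B)
          ≤ u a (L.toFinset.filter (fun g => alloc g = c a))) := by
  intro L
  induction L with
  | nil =>
      intro _
      obtain ⟨k', rfl⟩ := Nat.exists_eq_succ_of_ne_zero (show k ≠ 0 from by omega)
      obtain ⟨c, hc⟩ := ef1_exists_c0 k' nsize univ (by simpa [Finset.card_univ] using hsum)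
      refine ⟨c, fun _ => ⟨0, by omega⟩, hc, fun a j => ⟨∅, by simp, by simp, ?_⟩⟩
      simp only [List.toFinset_nil, Finset.filter_empty, sdiff_empty, le_refl]
  | cons g rest ih =>
      intro hnd
      have hgrest : g ∉ rest := (List.nodup_cons.mp hnd).1
      obtain ⟨c, alloc, hsz, hef⟩ := ih (List.nodup_cons.mp hnd).2
      set F : Fin k → Finset M := fun i => rest.toFinset.filter (fun x => alloc x = i)
        with hFdef
      obtain ⟨c', hsz', hef', jj, hjj⟩ := ef1_improve u hk nsize F c hsz hef
      set alloc' : M → Fin k := Function.update alloc g jj with halloc'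
      have hbundle : ∀ i, (g :: rest).toFinset.filter (fun x => alloc' x = i)
          = if i = jj then insert g (F i) else F i := by
        intro i
        have hinner : rest.toFinset.filter (fun x => alloc' x = i) = F i := by
          rw [hFdef]
          apply filter_congr
          intro x hx
          have hxg : x ≠ g := fun hxg => hgrest (hxg ▸ List.mem_toFinset.mp hx)
          rw [halloc', Function.update_of_ne hxg]
        rw [List.toFinset_cons, filter_insert, hinner]
        have hg' : alloc' g = jj := Function.update_self g jj alloc
        by_cases hij : i = jj
        · rw [if_pos hij, if_pos (by rw [hg', hij])]
        · rw [if_neg hij, if_neg (by rw [hg']; exact fun hc => hij hc.symm)]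
      refine ⟨c', alloc', hsz', fun a j => ?_⟩
      have hown : u a (F (c' a)) ≤ u a ((g :: rest).toFinset.filter
          (fun x => alloc' x = c' a)) := by
        apply hmono
        rw [hbundle (c' a)]
        by_cases hc : c' a = jj
        · rw [if_pos hc]; exact subset_insert _ _
        · rw [if_neg hc]
      by_cases hjjj : j = jj
      · subst hjjj
        refine ⟨{g}, ?_, by simp, ?_⟩
        · rw [hbundle j, if_pos rfl]
          exact singleton_subset_iff.mpr (mem_insert_self _ _)
        · rw [hbundle j, if_pos rfl]
          have hgF : g ∉ F j := by
            intro hgF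
            exact hgrest (List.mem_toFinset.mp (mem_filter.mp (hFdef ▸ hgF)).1)
          rw [Finset.insert_sdiff_of_mem _ (mem_singleton_self g),
            Finset.sdiff_singleton_eq_erase, Finset.erase_eq_of_notMem hgF]
          exact le_trans (hjj a) hown
      · obtain ⟨B, hB, hBcard, hBle⟩ := hef' a j
        refine ⟨B, ?_, hBcard, ?_⟩
        · rw [hbundle j, if_neg hjjj]; exact hB
        · rw [hbundle j, if_neg hjjj]
          exact le_trans hBle hown

end EF1Aux

/-- **EF1 outcomes always exist in the variable-group model.**
For any number of groups `k ≥ 2`, positive group sizes `nsize 1, …, nsize k` summing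
to `n`, any finite set `M` of `m` goods, and any monotone normalized utility
functions for the `n` agents, there exists an EF1 outcome: a partition of the agents
into groups (given by `c : Fin n → Fin k`) with the prescribed sizes, together with a
partition of the goods into bundles (given by `alloc : M → Fin k`), such that for all
groups `i, j` and every agent `a` in group `i`, there is a set `B` of at most one good
in bundle `j` with `u a (bundle i) ≥ u a (bundle j \ B)`. -/
theorem ef1_outcome_exists
    (k n m : ℕ) (hk : 2 ≤ k)
    (nsize : Fin k → ℕ) (hpos : ∀ i, 0 < nsize i) (hsum : ∑ i, nsize i = n)
    (M : Type*) [Fintype M] [DecidableEq M] (hM : Fintype.card M = m)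
    (u : Fin n → Finset M → ℝ)
    (hmono : ∀ (a : Fin n) (S T : Finset M), S ⊆ T → u a S ≤ u a T)
    (hnorm : ∀ a : Fin n, u a ∅ = 0) :
    ∃ (c : Fin n → Fin k) (alloc : M → Fin k),
      (∀ i : Fin k, (Finset.univ.filter fun a => c a = i).card = nsize i) ∧
      (∀ (i j : Fin k) (a : Fin n), c a = i →
        ∃ B ⊆ Finset.univ.filter (fun g => alloc g = j), B.card ≤ 1 ∧
          u a (Finset.univ.filter fun g => alloc g = i) ≥
            u a ((Finset.univ.filter fun g => alloc g = j) \ B)) := by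
  obtain ⟨c, alloc, hsz, hef⟩ := ef1_list u hk nsize hsum hmono
    (Finset.univ : Finset M).toList (Finset.nodup_toList _)
  rw [Finset.toList_toFinset] at hef
  refine ⟨c, alloc, hsz, fun i j a hci => ?_⟩
  obtain ⟨B, hB, hBcard, hBle⟩ := hef a j
  exact ⟨B, hB, hBcard, by rw [← hci]; exact hBle⟩
end

section
/- For any positive integers n and k with k dividing n, and any probability vector p = (p_1, …, p_k) with p_i > 0 for all i, there exists a real number r with 0 ≤ r ≤ k²/n such that the multinomial probability of the balanced outcome satisfies (n! / ((n/k)!)^k) · ∏_{i∈[k]} p_i^{n/k} = e^{−r} · (k^{k/2} / (2πn)^{(k−1)/2}) · e^{−n·KL}, where KL = ∑_{i∈[k]} (1/k) · ln((1/k)/p_i). -/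
/-!
Write `n! = √(2πn) (n/e)^n e^{θ(n)}`, where `θ(n) = log s(n) - log √π` for the Stirling sequence
`s = stirlingSeq` (`θ = stirlingRemainder`). Robbins' bound on the successive differences of `s`
gives `0 ≤ θ(n) ≤ 1/(12n)`, and `θ` is antitone. For `n = km` the powers of `n/e` and `m/e` cancel
in `n!/(m!)^k`, leaving `k^n · k^{k/2}/(2πn)^{(k-1)/2} · e^{-(kθ(m) - θ(n))}`, and
`k^n ∏ p_i^m = e^{-n·KL}`. So `r = kθ(m) - θ(n)`, which lies between `0` (as
`θ(n) ≤ θ(m) ≤ kθ(m)`) and `k/(12m) ≤ k²/n`.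
-/

open Finset Filter Real Stirling
open scoped Nat Topology

noncomputable def stirlingRemainder (n : ℕ) : ℝ := log (stirlingSeq n) - log √π

lemma stirlingRemainder_nonneg {n : ℕ} (hn : n ≠ 0) : 0 ≤ stirlingRemainder n :=
  sub_nonneg.2 <| log_le_log (by positivity) (sqrt_pi_le_stirlingSeq hn)

lemma stirlingRemainder_antitone {m n : ℕ} (hm : m ≠ 0) (hmn : m ≤ n) :
    stirlingRemainder n ≤ stirlingRemainder m := by
  obtain ⟨m, rfl⟩ := Nat.exists_eq_succ_of_ne_zero hm
  obtain ⟨n, rfl⟩ := Nat.exists_eq_succ_of_ne_zero (by omega : n ≠ 0)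
  exact sub_le_sub_right (log_stirlingSeq'_antitone (Nat.succ_le_succ_iff.1 hmn)) _

/-- Robbins' bound `log s(n) - log s(n+1) ≤ 1/(12n) - 1/(12(n+1))` makes `log s(n) - 1/(12n)`
increasing; its limit is `log √π`. -/
lemma stirlingRemainder_le {n : ℕ} (hn : n ≠ 0) : stirlingRemainder n ≤ 1 / (12 * n) := by
  obtain ⟨n, rfl⟩ := Nat.exists_eq_succ_of_ne_zero hn
  set g : ℕ → ℝ := fun j => log (stirlingSeq (j + 1)) - 1 / (12 * (j + 1 : ℕ))
  have hg : Monotone g := monotone_nat_of_le_succ fun j => by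
    have := log_stirlingSeq_sdiff_le (j + 1)
    simp only [g]
    push_cast at this ⊢
    field_simp at this ⊢
    nlinarith
  have hlim : Tendsto g atTop (𝓝 (log √π)) := by
    have hs := ((continuousAt_log (by positivity)).tendsto.comp
      tendsto_stirlingSeq_sqrt_pi).comp (tendsto_add_atTop_nat 1)
    have hr : Tendsto (fun j : ℕ => 1 / (12 * ((j + 1 : ℕ) : ℝ))) atTop (𝓝 0) := by
      simpa using (tendsto_one_div_add_atTop_nhds_zero_nat.mul_const (1 / 12 : ℝ))
    simpa [g] using hs.sub hr
  have := hg.ge_of_tendsto hlim n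
  simp only [g] at this
  unfold stirlingRemainder
  linarith

lemma factorial_eq_stirling_mul_exp {n : ℕ} (hn : n ≠ 0) :
    (n ! : ℝ) = √(2 * π * n) * (n / exp 1) ^ n * exp (stirlingRemainder n) := by
  have hs : 0 < stirlingSeq n := (by positivity : (0 : ℝ) < √π).trans_le (sqrt_pi_le_stirlingSeq hn)
  rw [stirlingRemainder, exp_sub, exp_log hs, exp_log (by positivity), stirlingSeq,
    sqrt_mul' _ (Nat.cast_nonneg n), sqrt_mul' _ (Nat.cast_nonneg n), sqrt_mul two_pos.le]
  have : (0 : ℝ) < n := by positivity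
  field_simp

lemma sqrt_mul_div_sqrt_pow {a : ℝ} (ha : 0 < a) {k : ℕ} (hk : k ≠ 0) :
    √(k * a) / √a ^ k = (k : ℝ) ^ ((k : ℝ) / 2) / (k * a) ^ (((k : ℝ) - 1) / 2) := by
  have hk' : (0 : ℝ) < k := by positivity
  rw [sqrt_eq_rpow, sqrt_eq_rpow, ← rpow_natCast, ← rpow_mul ha.le, sub_div,
    rpow_sub (by positivity), mul_rpow hk'.le ha.le, mul_rpow hk'.le ha.le]
  field_simp

lemma factorial_mul_div_factorial_pow {k m : ℕ} (hk : k ≠ 0) (hm : m ≠ 0) :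
    ((k * m) ! : ℝ) / (m ! : ℝ) ^ k =
      exp (-(k * stirlingRemainder m - stirlingRemainder (k * m))) *
        ((k : ℝ) ^ ((k : ℝ) / 2) / (2 * π * (k * m)) ^ (((k : ℝ) - 1) / 2)) * (k : ℝ) ^ (k * m) := by
  have hm' : (0 : ℝ) < m := by positivity
  have hsqrt := sqrt_mul_div_sqrt_pow (by positivity : 0 < 2 * π * m) hk
  rw [show (k : ℝ) * (2 * π * m) = 2 * π * (k * m) by ring] at hsqrt
  rw [← hsqrt, factorial_eq_stirling_mul_exp (mul_ne_zero hk hm), factorial_eq_stirling_mul_exp hm,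
    exp_neg, exp_sub, exp_nat_mul]
  push_cast
  field_simp
  ring

lemma exp_neg_mul_sum_log_div {ι : Type*} [Fintype ι] {p : ι → ℝ} (hp : ∀ i, 0 < p i)
    {c : ℝ} (hc : 0 < c) (m : ℕ) :
    exp (-(c * m) * ∑ i, 1 / c * log (1 / c / p i)) = ∏ i, (c * p i) ^ m := by
  rw [mul_sum, exp_sum]
  refine prod_congr rfl fun i _ => ?_
  have hlog : -(c * m) * (1 / c * log (1 / c / p i)) = m * log (c * p i) := by
    rw [div_div, one_div (c * p i), log_inv]
    field_simp
  rw [hlog, exp_nat_mul, exp_log (mul_pos hc (hp i))]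

theorem multinomial_balanced_mass_estimate_general
    (k n : ℕ) (hk : 0 < k) (hn : 0 < n) (hdvd : k ∣ n)
    (p : Fin k → ℝ) (hp : ∀ i, 0 < p i) :
    ∃ r : ℝ, 0 ≤ r ∧ r ≤ (k : ℝ) ^ 2 / (n : ℝ) ∧
      (n.factorial : ℝ) / ((n / k).factorial : ℝ) ^ k * ∏ i, p i ^ (n / k) =
        Real.exp (-r) *
          ((k : ℝ) ^ ((k : ℝ) / 2) / (2 * Real.pi * n) ^ (((k : ℝ) - 1) / 2)) *
          Real.exp (-(n : ℝ) *
            ∑ i, (1 / (k : ℝ)) * Real.log ((1 / (k : ℝ)) / p i)) := by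
  obtain ⟨m, rfl⟩ := hdvd
  have hk0 : k ≠ 0 := hk.ne'
  have hm0 : m ≠ 0 := by rintro rfl; simp at hn
  have hθkm := stirlingRemainder_nonneg (mul_ne_zero hk0 hm0)
  have hθ_anti := stirlingRemainder_antitone hm0 (Nat.le_mul_of_pos_left m hk)
  have hθm := stirlingRemainder_le hm0
  have hk1 : (1 : ℝ) ≤ k := by exact_mod_cast hk
  have hm' : (0 : ℝ) < m := by positivity
  refine ⟨k * stirlingRemainder m - stirlingRemainder (k * m), ?_, ?_, ?_⟩
  · nlinarith
  · calc k * stirlingRemainder m - stirlingRemainder (k * m)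
        ≤ k * (1 / (12 * m)) := by nlinarith
      _ ≤ k / m := by rw [mul_one_div]; gcongr; linarith
      _ = (k : ℝ) ^ 2 / ((k * m : ℕ) : ℝ) := by push_cast; field_simp
  · rw [Nat.mul_div_cancel_left m hk, factorial_mul_div_factorial_pow hk0 hm0, Nat.cast_mul,
      exp_neg_mul_sum_log_div hp (by positivity)]
    simp only [mul_pow, prod_mul_distrib, prod_const, card_univ, Fintype.card_fin, ← pow_mul]
    ring

/-- **Stirling estimate for the balanced multinomial probability.**
For any positive integers `n` and `k` with `k ∣ n`, and any probability vector `p`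
with strictly positive entries, there is `r ∈ [0, k²/n]` such that
`(n! / ((n/k)!)^k) · ∏_i p_i^{n/k}
  = e^{-r} · (k^{k/2} / (2πn)^{(k-1)/2}) · e^{-n·KL}`,
where `KL = ∑_i (1/k)·ln((1/k)/p_i)`. -/
theorem multinomial_balanced_mass_estimate
    (k n : ℕ) (hk : 0 < k) (hn : 0 < n) (hdvd : k ∣ n)
    (p : Fin k → ℝ) (hp : ∀ i, 0 < p i) (hsum : ∑ i, p i = 1) :
    ∃ r : ℝ, 0 ≤ r ∧ r ≤ (k : ℝ) ^ 2 / (n : ℝ) ∧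
      (n.factorial : ℝ) / ((n / k).factorial : ℝ) ^ k * ∏ i, p i ^ (n / k) =
        Real.exp (-r) *
          ((k : ℝ) ^ ((k : ℝ) / 2) / (2 * Real.pi * n) ^ (((k : ℝ) - 1) / 2)) *
          Real.exp (-(n : ℝ) *
            ∑ i, (1 / (k : ℝ)) * Real.log ((1 / (k : ℝ)) / p i)) :=
  multinomial_balanced_mass_estimate_general k n hk hn hdvd p hp
end

section
/- For any n ∈ ℕ, any probability vector p = (p_1, …, p_k) with p_i > 0 for all i, and any x = (x_1, …, x_k) of positive integers with x_1 + ⋯ + x_k = n, the multinomial probability (n!/(x_1!⋯x_k!)) ∏_{i∈[k]} p_i^{x_i} equals e^{−r_x} · (√n / ((2π)^{(k−1)/2} √(∏_{i∈[k]} x_i))) · e^{−n·KL}, where KL = ∑_{i∈[k]} (x_i/n) · ln((x_i/n)/p_i) and r_x is a real number satisfying 0 ≤ r_x ≤ k / (min_{i∈[k]} x_i). -/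
open Stirling Real Filter
open scoped Topology
noncomputable def sA (m : ℕ) : ℝ := Real.log (Stirling.stirlingSeq m) - Real.log (Real.sqrt π)

lemma sqrtpi_le (m : ℕ) : Real.sqrt π ≤ stirlingSeq (m + 1) :=
  stirlingSeq'_antitone.le_of_tendsto
    ((tendsto_stirlingSeq_sqrt_pi.comp (tendsto_add_atTop_nat 1))) m

lemma sA_nonneg {m : ℕ} (hm : 1 ≤ m) : 0 ≤ sA m := by
  obtain ⟨m, rfl⟩ := Nat.exists_eq_add_of_le hm
  have := sqrtpi_le m
  have h2 : (0:ℝ) < Real.sqrt π := Real.sqrt_pos.mpr Real.pi_pos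
  have := Real.log_le_log h2 (by simpa [add_comm] using this)
  simpa [sA, add_comm] using this

lemma sA_anti {m m' : ℕ} (hm : 1 ≤ m) (h : m ≤ m') : sA m' ≤ sA m := by
  obtain ⟨a, rfl⟩ := Nat.exists_eq_add_of_le hm
  obtain ⟨b, rfl⟩ := Nat.exists_eq_add_of_le h
  have hab : a ≤ a + b := Nat.le_add_right a b
  have := log_stirlingSeq'_antitone hab
  simp only [Function.comp, Nat.succ_eq_add_one] at this
  have := sub_le_sub_right this (Real.log (Real.sqrt π))
  simp only [sA]
  have e1 : a + b + 1 = 1 + a + b := by ring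
  have e2 : a + 1 = 1 + a := by ring
  rw [← e1, ← e2]
  exact this

lemma sA_le {m : ℕ} (hm : 1 ≤ m) : sA m ≤ 1 / m := by
  obtain ⟨a, rfl⟩ := Nat.exists_eq_add_of_le hm
  rw [Nat.add_comm 1 a]
  set c : ℕ → ℝ := fun j => 1 / (2 * (2 * (j:ℝ) + 1)) with hc
  set f : ℕ → ℝ := fun j => Real.log (stirlingSeq (j + 1)) - c j with hf
  have hmono : Monotone f := by
    apply monotone_nat_of_le_succ
    intro j
    have h1 := log_stirlingSeq_sub_log_stirlingSeq_succ j
    have h2 : 1 / (4 * ((j:ℝ) + 1) ^ 2) ≤ c j - c (j + 1) := by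
      have hj : (0:ℝ) ≤ (j:ℝ) := Nat.cast_nonneg j
      simp only [hc]
      push_cast
      rw [div_sub_div _ _ (by positivity) (by positivity), div_le_div_iff₀ (by positivity) (by positivity)]
      ring_nf
      nlinarith [sq_nonneg ((j:ℝ))]
    have h1' : Real.log (stirlingSeq (j + 1)) - Real.log (stirlingSeq (j + 2)) ≤
        1 / (4 * ((j:ℝ) + 1) ^ 2) := by
      have := log_stirlingSeq_sub_log_stirlingSeq_succ (j + 1)
      push_cast at this ⊢
      convert this using 3
    simp only [hf]
    have : Real.log (stirlingSeq (j + 1)) - Real.log (stirlingSeq (j + 1 + 1)) ≤ c j - c (j+1) :=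
      le_trans (by push_cast; linarith [h1']) h2
    linarith
  have hlim : Tendsto f atTop (𝓝 (Real.log (Real.sqrt π))) := by
    have hπ : (0:ℝ) < Real.sqrt π := Real.sqrt_pos.mpr Real.pi_pos
    have h1 : Tendsto (fun j : ℕ => Real.log (stirlingSeq (j + 1))) atTop
        (𝓝 (Real.log (Real.sqrt π))) :=
      ((Real.continuousAt_log hπ.ne').tendsto).comp
        (tendsto_stirlingSeq_sqrt_pi.comp (tendsto_add_atTop_nat 1))
    have h2 : Tendsto c atTop (𝓝 0) := by
      have g1 : Tendsto (fun j : ℕ => 2 * (2 * (j:ℝ) + 1)) atTop atTop := by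
        apply Tendsto.const_mul_atTop (by norm_num : (0:ℝ) < 2)
        apply Filter.tendsto_atTop_add_const_right
        exact Tendsto.const_mul_atTop (by norm_num : (0:ℝ) < 2) tendsto_natCast_atTop_atTop
      have := tendsto_inv_atTop_zero.comp g1
      simp only [Function.comp_def] at this
      refine this.congr fun j => ?_
      simp [hc, one_div]
    simpa using h1.sub h2
  have hfin : f a ≤ Real.log (Real.sqrt π) := hmono.ge_of_tendsto hlim a
  have : sA (a + 1) ≤ c a := by
    simp only [sA, hf] at hfin ⊢
    linarith
  refine this.trans ?_
  rw [hc]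
  have ha : (0:ℝ) ≤ (a:ℝ) := Nat.cast_nonneg a
  rw [div_le_div_iff₀ (by positivity) (by push_cast; positivity)]
  push_cast
  nlinarith

lemma log_fact {m : ℕ} (hm : 1 ≤ m) :
    Real.log (Nat.factorial m : ℝ) = sA m + Real.log (Real.sqrt π) + 1/2 * Real.log 2
      + 1/2 * Real.log m + m * Real.log m - m := by
  have hm' : (0:ℝ) < m := by exact_mod_cast hm
  have h := log_stirlingSeq_formula m
  have h2 : Real.log (2 * (m:ℝ)) = Real.log 2 + Real.log m :=
    Real.log_mul (by norm_num) hm'.ne'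
  have h3 : Real.log ((m:ℝ) / Real.exp 1) = Real.log m - 1 := by
    rw [Real.log_div hm'.ne' (Real.exp_ne_zero 1), Real.log_exp]
  have : Real.log (stirlingSeq m) = sA m + Real.log (Real.sqrt π) := by simp [sA]
  rw [this] at h
  rw [h2, h3] at h
  linarith


/-- **Stirling estimate for general multinomial probabilities.**
For any `n ∈ ℕ`, any probability vector `p` with strictly positive entries, and any
vector `x` of positive integers with `∑ x_i = n`, the multinomial probability
`(n!/(x_1!⋯x_k!)) ∏_i p_i^{x_i}` equals
`e^{-r_x} · (√n / ((2π)^{(k-1)/2} √(∏_i x_i))) · e^{-n·KL}`,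
where `KL = ∑_i (x_i/n)·ln((x_i/n)/p_i)` and `0 ≤ r_x ≤ k / min_i x_i`. -/
theorem multinomial_mass_estimate
    (k n : ℕ) (hk : 0 < k)
    (p : Fin k → ℝ) (hp : ∀ i, 0 < p i) (hpsum : ∑ i, p i = 1)
    (x : Fin k → ℕ) (hx : ∀ i, 0 < x i) (hxsum : ∑ i, x i = n) :
    ∃ r : ℝ, 0 ≤ r ∧
      r ≤ (k : ℝ) /
        ((Finset.univ.inf' (Finset.univ_nonempty_iff.mpr ⟨⟨0, hk⟩⟩) x : ℕ) : ℝ) ∧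
      (n.factorial : ℝ) / (∏ i, ((x i).factorial : ℝ)) * ∏ i, p i ^ (x i) =
        Real.exp (-r) *
          (Real.sqrt n /
            ((2 * Real.pi) ^ (((k : ℝ) - 1) / 2) * Real.sqrt (∏ i, (x i : ℝ)))) *
          Real.exp (-(n : ℝ) *
            ∑ i, ((x i : ℝ) / (n : ℝ)) * Real.log (((x i : ℝ) / (n : ℝ)) / p i)) := by
  classical
  have i0 : Fin k := ⟨0, hk⟩
  have hxle : ∀ i, x i ≤ n := fun i => hxsum ▸ Finset.single_le_sum (fun j _ => Nat.zero_le _) (Finset.mem_univ i)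
  have hn : 1 ≤ n := le_trans (hx i0) (hxle i0)
  have hn' : (0:ℝ) < n := by exact_mod_cast hn
  set m : ℕ := Finset.univ.inf' (Finset.univ_nonempty_iff.mpr ⟨⟨0, hk⟩⟩) x with hm
  have hm1 : 1 ≤ m := Finset.le_inf' _ _ fun i _ => hx i
  have hmle : ∀ i, m ≤ x i := fun i => Finset.inf'_le _ (Finset.mem_univ i)
  have hm' : (0:ℝ) < m := by exact_mod_cast hm1
  refine ⟨(∑ i, sA (x i)) - sA n, ?_, ?_, ?_⟩
  · -- nonneg
    have h1 : sA (x i0) ≤ ∑ i, sA (x i) :=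
      Finset.single_le_sum (fun i _ => sA_nonneg (hx i)) (Finset.mem_univ i0)
    have h2 : sA n ≤ sA (x i0) := sA_anti (hx i0) (hxle i0)
    linarith
  · -- upper bound
    have h1 : ∑ i, sA (x i) ≤ ∑ i : Fin k, 1 / (m:ℝ) := by
      apply Finset.sum_le_sum
      intro i _
      refine (sA_le (hx i)).trans ?_
      apply one_div_le_one_div_of_le hm'
      exact_mod_cast hmle i
    have h2 : (∑ _i : Fin k, 1 / (m:ℝ)) = k / m := by
      rw [Finset.sum_const, Finset.card_univ, Fintype.card_fin, nsmul_eq_mul]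
      ring
    have h3 : 0 ≤ sA n := sA_nonneg hn
    rw [h2] at h1
    linarith
  · -- the equation
    have hxpos : ∀ i, (0:ℝ) < x i := fun i => by exact_mod_cast hx i
    have hfacpos : (0:ℝ) < ∏ i, ((x i).factorial : ℝ) :=
      Finset.prod_pos fun i _ => by positivity
    have hxsum' : (∑ i, (x i : ℝ)) = n := by exact_mod_cast hxsum
    have hL : (0:ℝ) < (n.factorial : ℝ) / (∏ i, ((x i).factorial : ℝ)) * ∏ i, p i ^ (x i) := by
      have : (0:ℝ) < ∏ i, p i ^ (x i) := Finset.prod_pos fun i _ => pow_pos (hp i) _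
      positivity
    have hprodx : (0:ℝ) < ∏ i, (x i : ℝ) := Finset.prod_pos fun i _ => hxpos i
    have h2π : (0:ℝ) < 2 * π := by positivity
    have hM : (0:ℝ) < Real.sqrt n /
        ((2 * Real.pi) ^ (((k : ℝ) - 1) / 2) * Real.sqrt (∏ i, (x i : ℝ))) := by
      have h1 : (0:ℝ) < (2 * Real.pi) ^ (((k : ℝ) - 1) / 2) := Real.rpow_pos_of_pos h2π _
      have h2 : (0:ℝ) < Real.sqrt (∏ i, (x i : ℝ)) := Real.sqrt_pos.mpr hprodx
      have h3 : (0:ℝ) < Real.sqrt n := Real.sqrt_pos.mpr hn'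
      positivity
    have hR : (0:ℝ) < Real.exp (-((∑ i, sA (x i)) - sA n)) *
          (Real.sqrt n /
            ((2 * Real.pi) ^ (((k : ℝ) - 1) / 2) * Real.sqrt (∏ i, (x i : ℝ)))) *
          Real.exp (-(n : ℝ) *
            ∑ i, ((x i : ℝ) / (n : ℝ)) * Real.log (((x i : ℝ) / (n : ℝ)) / p i)) := by
      positivity
    rw [← Real.exp_log hL, ← Real.exp_log hR]
    congr 1
    -- now an equation between logs
    have hlogL : Real.log ((n.factorial : ℝ) / (∏ i, ((x i).factorial : ℝ)) * ∏ i, p i ^ (x i))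
        = Real.log (n.factorial : ℝ) - (∑ i, Real.log ((x i).factorial : ℝ))
          + ∑ i, (x i : ℝ) * Real.log (p i) := by
      rw [Real.log_mul (by positivity) (ne_of_gt (Finset.prod_pos fun i _ => pow_pos (hp i) _)),
        Real.log_div (by positivity) hfacpos.ne',
        Real.log_prod (fun i _ => by positivity),
        Real.log_prod (fun i _ => (pow_pos (hp i) _).ne')]
      simp [Real.log_pow]
    have hlogR : Real.log (Real.exp (-((∑ i, sA (x i)) - sA n)) *
          (Real.sqrt n /
            ((2 * Real.pi) ^ (((k : ℝ) - 1) / 2) * Real.sqrt (∏ i, (x i : ℝ)))) *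
          Real.exp (-(n : ℝ) *
            ∑ i, ((x i : ℝ) / (n : ℝ)) * Real.log (((x i : ℝ) / (n : ℝ)) / p i)))
        = -((∑ i, sA (x i)) - sA n)
          + (1/2 * Real.log n - (((k:ℝ)-1)/2 * Real.log (2*π) + 1/2 * ∑ i, Real.log (x i : ℝ)))
          + ∑ i, (-(x i : ℝ)) * (Real.log (x i : ℝ) - Real.log (n:ℝ) - Real.log (p i)) := by
      rw [Real.log_mul (mul_pos (Real.exp_pos _) hM).ne' (Real.exp_ne_zero _),
        Real.log_mul (Real.exp_ne_zero _) hM.ne',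
        Real.log_exp, Real.log_exp,
        Real.log_div (Real.sqrt_pos.mpr hn').ne'
          (mul_pos (Real.rpow_pos_of_pos h2π _) (Real.sqrt_pos.mpr hprodx)).ne',
        Real.log_mul (Real.rpow_pos_of_pos h2π _).ne' (Real.sqrt_pos.mpr hprodx).ne',
        Real.log_rpow h2π, Real.log_sqrt hn'.le, Real.log_sqrt hprodx.le,
        Real.log_prod (fun i _ => (hxpos i).ne')]
      congr 1
      · ring
      · rw [Finset.mul_sum]
        apply Finset.sum_congr rfl
        intro i _
        rw [Real.log_div (div_pos (hxpos i) hn').ne' (hp i).ne', Real.log_div (hxpos i).ne' hn'.ne']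
        field_simp
    rw [hlogL, hlogR]
    -- expand factorial logs
    rw [log_fact hn]
    have hsum : (∑ i, Real.log ((x i).factorial : ℝ))
        = ∑ i, (sA (x i) + Real.log (Real.sqrt π) + 1/2 * Real.log 2
            + 1/2 * Real.log (x i) + (x i : ℝ) * Real.log (x i) - (x i : ℝ)) :=
      Finset.sum_congr rfl fun i _ => log_fact (hx i)
    rw [hsum]
    have hlogsqrtpi : Real.log (Real.sqrt π) = 1/2 * Real.log π := by
      rw [Real.log_sqrt Real.pi_pos.le]; ring
    have hlog2π : Real.log (2*π) = Real.log 2 + Real.log π :=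
      Real.log_mul two_ne_zero Real.pi_pos.ne'
    have hexp : (∑ i, (-(x i : ℝ)) * (Real.log (x i:ℝ) - Real.log (n:ℝ) - Real.log (p i)))
        = -(∑ i, (x i:ℝ) * Real.log (x i)) + (n:ℝ) * Real.log (n:ℝ)
          + ∑ i, (x i:ℝ) * Real.log (p i) := by
      simp only [neg_mul, mul_sub, Finset.sum_neg_distrib, Finset.sum_sub_distrib]
      rw [← Finset.sum_mul, hxsum']
      ring
    rw [hexp]
    simp only [Finset.sum_sub_distrib, Finset.sum_add_distrib, Finset.sum_const,
      Finset.card_univ, Fintype.card_fin, nsmul_eq_mul,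
      hlogsqrtpi, hlog2π, hxsum']
    rw [show (∑ i, 1/2 * Real.log (x i:ℝ)) = 1/2 * ∑ i, Real.log (x i:ℝ) from
      (Finset.mul_sum _ _ _).symm]
    ring
end

section
/- For any positive integers r and k with r ≥ k, the maximal probability of the symmetric multinomial distribution Mult(r, (1/k, …, 1/k)) satisfies max over all x = (x_1, …, x_k) of non-negative integers summing to r of (r!/(x_1!⋯x_k!)) · (1/k)^r ≤ k^{k/2} / (2πr)^{(k−1)/2}. -/
open Real Filter Finset Set Topology


lemma log2pi_le : Real.log (2*π) ≤ 23/12 := by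
  rw [Real.log_le_iff_le_exp (by positivity)]
  have h1 : Real.exp (23/12) * Real.exp (1/12) = Real.exp 2 := by
    rw [← Real.exp_add]; norm_num
  have h3 : (0:ℝ) < Real.exp (1/12) := Real.exp_pos _
  have h2 : Real.exp (1/12) ≤ 12/11 := by
    have h := Real.add_one_le_exp (-(1/12) : ℝ)
    rw [Real.exp_neg] at h
    have h5 : Real.exp (1/12) * (Real.exp (1/12))⁻¹ = 1 := mul_inv_cancel₀ h3.ne'
    nlinarith
  have h4 : (2.7182818283:ℝ) < Real.exp 1 := Real.exp_one_gt_d9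
  have h5 : Real.exp 2 = Real.exp 1 * Real.exp 1 := by rw [← Real.exp_add]; norm_num
  have h6 : π < 3.15 := Real.pi_lt_d2
  nlinarith [Real.exp_pos (23/12:ℝ)]


lemma aux_i {v : ℝ} (hv : 1 ≤ v) : 2 * Real.log v ≤ v - v⁻¹ := by
  have hg : ∀ x ∈ Set.Ioi (1:ℝ), HasDerivAt (fun v : ℝ => v - v⁻¹ - 2*Real.log v)
      (1 - (-(x^2)⁻¹) - 2*x⁻¹) x := by
    intro x hx
    have hx1 : (1:ℝ) < x := hx
    have hx0 : x ≠ 0 := by positivity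
    exact ((hasDerivAt_id x).sub (hasDerivAt_inv hx0)).sub
      ((Real.hasDerivAt_log hx0).const_mul 2)
  have key : MonotoneOn (fun v : ℝ => v - v⁻¹ - 2*Real.log v) (Set.Ici 1) := by
    apply monotoneOn_of_deriv_nonneg (convex_Ici 1)
    · apply ContinuousOn.sub
      · refine continuousOn_id.sub (continuousOn_inv₀.mono ?_)
        intro x hx
        simp only [Set.mem_Ici] at hx
        simp only [Set.mem_compl_iff, Set.mem_singleton_iff]
        intro h; rw [h] at hx; linarith
      · refine continuousOn_const.mul (Real.continuousOn_log.mono ?_)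
        intro x hx
        simp only [Set.mem_Ici] at hx
        simp only [Set.mem_compl_iff, Set.mem_singleton_iff]
        intro h; rw [h] at hx; linarith
    · intro x hx
      rw [interior_Ici] at hx
      exact (hg x hx).differentiableAt.differentiableWithinAt
    · intro x hx
      rw [interior_Ici] at hx
      rw [(hg x hx).deriv]
      have hx1 : (1:ℝ) < x := hx
      have hx0 : (0:ℝ) < x := by linarith
      have h : 1 - (-(x^2)⁻¹) - 2*x⁻¹ = (1 - x⁻¹)^2 := by field_simp; ring
      rw [h]; positivity
  have h0 : (fun v : ℝ => v - v⁻¹ - 2*Real.log v) 1 = 0 := by norm_num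
  have := key (Set.self_mem_Ici) hv hv
  rw [h0] at this
  linarith [this]

lemma aux_ii {s : ℝ} (hs : 1 ≤ s) : 2*(s-1)/(s+1) ≤ Real.log s := by
  have hg : ∀ x ∈ Set.Ioi (1:ℝ), HasDerivAt (fun s : ℝ => Real.log s - 2*(s-1)/(s+1))
      (x⁻¹ - (2*1*(x+1) - 2*(x-1)*1)/(x+1)^2) x := by
    intro x hx
    have hx1 : (1:ℝ) < x := hx
    have hx0 : x ≠ 0 := by positivity
    have hx0' : x + 1 ≠ 0 := by positivity
    have := (Real.hasDerivAt_log hx0).sub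
      ((((hasDerivAt_id x).sub_const 1).const_mul 2).div ((hasDerivAt_id x).add_const 1) hx0')
    exact this
  have key : MonotoneOn (fun s : ℝ => Real.log s - 2*(s-1)/(s+1)) (Set.Ici 1) := by
    apply monotoneOn_of_deriv_nonneg (convex_Ici 1)
    · apply ContinuousOn.sub
      · refine Real.continuousOn_log.mono ?_
        intro x hx
        simp only [Set.mem_Ici] at hx
        simp only [Set.mem_compl_iff, Set.mem_singleton_iff]
        intro h; rw [h] at hx; linarith
      · refine ContinuousOn.div (by fun_prop) (by fun_prop) ?_
        intro x hx
        simp only [Set.mem_Ici] at hx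
        positivity
    · intro x hx
      rw [interior_Ici] at hx
      exact (hg x hx).differentiableAt.differentiableWithinAt
    · intro x hx
      rw [interior_Ici] at hx
      rw [(hg x hx).deriv]
      have hx1 : (1:ℝ) < x := hx
      have hx0 : (0:ℝ) < x := by linarith
      have h : x⁻¹ - (2*1*(x+1) - 2*(x-1)*1)/(x+1)^2 = (x-1)^2/(x*(x+1)^2) := by
        field_simp; ring
      rw [h]; positivity
  have h0 : (fun s : ℝ => Real.log s - 2*(s-1)/(s+1)) 1 = 0 := by norm_num
  have := key (Set.self_mem_Ici) hs hs
  rw [h0] at this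
  linarith [this]



lemma phi_nonneg {m s : ℝ} (hm : 1 ≤ m) (hms : 1 ≤ m * s) (hs : 0 < s) :
    (m + 1/2)*(s - 1) ≤ (m*s + 1/2) * Real.log s := by
  rcases le_or_gt 1 s with h1 | h1
  · have hl := aux_ii h1
    have hpos : (0:ℝ) < m*s + 1/2 := by nlinarith
    have h2 : (m*s + 1/2) * (2*(s-1)/(s+1)) ≤ (m*s + 1/2) * Real.log s :=
      mul_le_mul_of_nonneg_left hl (le_of_lt hpos)
    refine le_trans ?_ h2
    rw [← sub_nonneg]
    have key : (m*s + 1/2) * (2*(s-1)/(s+1)) - (m + 1/2)*(s-1)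
        = (s-1)^2 * (m - 1/2) / (s+1) := by field_simp; ring
    rw [key]
    have hm2 : (0:ℝ) ≤ m - 1/2 := by linarith
    have hs1 : (0:ℝ) < s + 1 := by linarith
    positivity
  · set u := Real.sqrt s with hu
    have hu0 : 0 < u := Real.sqrt_pos.2 hs
    have hu2 : u^2 = s := Real.sq_sqrt hs.le
    have hu1 : u ≤ 1 := by nlinarith [hu2]
    have hv1 : 1 ≤ u⁻¹ := (one_le_inv₀ hu0).2 hu1
    have hlog : (s - 1)/u ≤ Real.log s := by
      have h3 := aux_i hv1
      rw [inv_inv, Real.log_inv] at h3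
      have hlu : Real.log s = 2 * Real.log u := by
        rw [← hu2, Real.log_pow]; push_cast; ring
      have e : (s-1)/u = u - u⁻¹ := by rw [← hu2]; field_simp
      rw [hlu, e]; linarith
    have hpos : (0:ℝ) < m*s + 1/2 := by nlinarith
    have h2 : (m*s + 1/2) * ((s-1)/u) ≤ (m*s + 1/2) * Real.log s :=
      mul_le_mul_of_nonneg_left hlog hpos.le
    refine le_trans ?_ h2
    have h2mu : 1 ≤ 2*m*u := by nlinarith [hu2, sq_nonneg (2*m*u - 2)]
    have hbr : m*u^2 + 1/2 ≤ (m + 1/2)*u := by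
      nlinarith [mul_nonneg (sub_nonneg.2 h2mu) (sub_nonneg.2 hu1)]
    rw [← sub_nonneg]
    have key : (m*s + 1/2)*((s-1)/u) - (m + 1/2)*(s-1)
        = (1 - s) * ((m+1/2)*u - (m*s + 1/2)) / u := by field_simp; ring
    rw [key]
    have h3 : 0 ≤ (m+1/2)*u - (m*s + 1/2) := by rw [← hu2]; linarith [hbr]
    have h1s : 0 ≤ 1 - s := by linarith
    exact div_nonneg (mul_nonneg h1s h3) hu0.le



lemma tangent {m x : ℝ} (hm : 1 ≤ m) (hx : 1 ≤ x) :
    (m + 1/2)*Real.log m + (Real.log m + 1 + 1/(2*m))*(x - m) ≤ (x + 1/2)*Real.log x := by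
  have hm0 : (0:ℝ) < m := by linarith
  have hx0 : (0:ℝ) < x := by linarith
  set s := x/m with hs
  have hs0 : 0 < s := by positivity
  have hxms : x = m * s := by rw [hs, mul_div_assoc', mul_comm, mul_div_assoc, div_self hm0.ne', mul_one]
  have hms : 1 ≤ m * s := by rw [← hxms]; exact hx
  have hphi := phi_nonneg hm hms hs0
  rw [← hxms] at hphi
  have hlx : Real.log x = Real.log m + Real.log s := by
    rw [hxms, Real.log_mul hm0.ne' hs0.ne']
  rw [hlx]
  have hxm : x - m = m*(s-1) := by rw [hxms]; ring
  have key : (x + 1/2)*(Real.log m + Real.log s) - (m + 1/2)*Real.log m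
      - (Real.log m + 1 + 1/(2*m))*(x-m) = (x + 1/2)*Real.log s - (m+1/2)*(s-1) := by
    rw [hxm, hxms]; field_simp; ring
  linarith [key, hphi]

lemma jensen {ι : Type*} (S : Finset ι) (y : ι → ℕ) (hy : ∀ i ∈ S, 1 ≤ y i) (hne : S.Nonempty) :
    ((∑ i ∈ S, (y i : ℝ)) + (S.card:ℝ)/2) *
        (Real.log (∑ i ∈ S, (y i:ℝ)) - Real.log (S.card:ℝ))
      ≤ ∑ i ∈ S, ((y i : ℝ) + 1/2) * Real.log (y i) := by
  set A : ℝ := (S.card : ℝ) with hA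
  set R : ℝ := ∑ i ∈ S, (y i : ℝ) with hR
  have hA0 : 0 < A := by
    rw [hA]; exact_mod_cast Finset.card_pos.2 hne
  have hRA : A ≤ R := by
    rw [hA, hR]
    calc ((S.card : ℕ) : ℝ) = ∑ _i ∈ S, (1:ℝ) := by rw [Finset.sum_const, nsmul_eq_mul, mul_one]
    _ ≤ ∑ i ∈ S, (y i : ℝ) := Finset.sum_le_sum (fun i hi => by exact_mod_cast hy i hi)
  have hR0 : 0 < R := lt_of_lt_of_le hA0 hRA
  set m := R/A with hmdef
  have hm : 1 ≤ m := (one_le_div hA0).2 hRA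
  have hAm : A * m = R := by rw [hmdef]; field_simp
  have h1 : ∑ i ∈ S, ((m + 1/2)*Real.log m + (Real.log m + 1 + 1/(2*m))*((y i:ℝ) - m))
      ≤ ∑ i ∈ S, ((y i : ℝ) + 1/2) * Real.log (y i) :=
    Finset.sum_le_sum (fun i hi => tangent hm (by exact_mod_cast hy i hi))
  have h2 : ∑ i ∈ S, ((m + 1/2)*Real.log m + (Real.log m + 1 + 1/(2*m))*((y i:ℝ) - m))
      = A*((m + 1/2)*Real.log m) := by
    rw [Finset.sum_add_distrib, Finset.sum_const, ← Finset.mul_sum, Finset.sum_sub_distrib,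
      Finset.sum_const, nsmul_eq_mul, nsmul_eq_mul, ← hR, ← hA, hAm, sub_self, mul_zero, add_zero]
  have h3 : A*((m+1/2)*Real.log m) = (R + A/2)*(Real.log R - Real.log A) := by
    rw [show Real.log m = Real.log R - Real.log A from by rw [hmdef, Real.log_div hR0.ne' hA0.ne'],
      hmdef]
    field_simp
  linarith [h1, h2, h3]


lemma step_hasSum (n : ℕ) :
    HasSum (fun k : ℕ => (1 : ℝ) / (2 * ((k:ℝ) + 1) + 1) *
        (((1 / (2 * ((n:ℝ) + 1) + 1)) ^ 2) ^ (k+1)))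
      (Real.log (Stirling.stirlingSeq (n + 1)) - Real.log (Stirling.stirlingSeq (n + 2))) := by
  have h := Stirling.log_stirlingSeq_diff_hasSum n
  convert h using 2 with k
  push_cast
  ring

lemma step_upper (n : ℕ) :
    Real.log (Stirling.stirlingSeq (n + 1)) - Real.log (Stirling.stirlingSeq (n + 2))
      ≤ 1/(12*((n:ℝ)+1)) - 1/(12*((n:ℝ)+2)) := by
  have hN1 : (1:ℝ) ≤ (n:ℝ) + 1 := by have : (0:ℝ) ≤ (n:ℝ) := Nat.cast_nonneg n; linarith
  set N : ℝ := (n:ℝ) + 1 with hN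
  set t : ℝ := 1 / (2 * N + 1) with ht
  have hNpos : (0:ℝ) < N := by linarith
  have ht0 : 0 < t := by rw [ht]; positivity
  have ht2 : t^2 < 1 := by
    rw [ht, div_pow, div_lt_one (by positivity)]; nlinarith
  have hgeo : HasSum (fun k : ℕ => t^2/3 * (t^2)^k) (t^2/3 * (1 - t^2)⁻¹) :=
    (hasSum_geometric_of_lt_one (sq_nonneg t) ht2).mul_left _
  have hle := hasSum_le (f := fun k : ℕ => (1 : ℝ) / (2 * ((k:ℝ) + 1) + 1) * ((t^2) ^ (k+1)))
    (g := fun k : ℕ => t^2/3 * (t^2)^k) ?_ (step_hasSum n) hgeo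
  · refine hle.trans (le_of_eq ?_)
    have e1 : (1:ℝ) - t^2 = (4*N*(N+1))/(2*N+1)^2 := by
      rw [ht]; field_simp; ring
    have e2 : ((n:ℝ) + 2) = N + 1 := by rw [hN]; ring
    rw [e1, e2, ht, inv_div]
    field_simp
    ring
  · intro k
    have h13 : (1:ℝ)/(2*((k:ℝ)+1)+1) ≤ 1/3 := by
      apply one_div_le_one_div_of_le (by norm_num)
      have : (0:ℝ) ≤ (k:ℝ) := Nat.cast_nonneg k
      linarith
    calc (1:ℝ)/(2*((k:ℝ)+1)+1) * (t^2)^(k+1)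
        ≤ 1/3 * (t^2)^(k+1) := mul_le_mul_of_nonneg_right h13 (by positivity)
      _ = t^2/3 * (t^2)^k := by rw [pow_succ]; ring

lemma step_lower (n : ℕ) :
    1/(12*((n:ℝ)+1)+1) - 1/(12*((n:ℝ)+2)+1)
      ≤ Real.log (Stirling.stirlingSeq (n + 1)) - Real.log (Stirling.stirlingSeq (n + 2)) := by
  have hN1 : (1:ℝ) ≤ (n:ℝ) + 1 := by have : (0:ℝ) ≤ (n:ℝ) := Nat.cast_nonneg n; linarith
  set N : ℝ := (n:ℝ) + 1 with hN
  set t : ℝ := 1 / (2 * N + 1) with ht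
  have hNpos : (0:ℝ) < N := by linarith
  have ht0 : 0 < t := by rw [ht]; positivity
  have hps := sum_le_hasSum (Finset.range 2)
    (fun k _ => by positivity : ∀ k ∉ Finset.range 2, (0:ℝ) ≤
      (1 : ℝ) / (2 * ((k:ℝ) + 1) + 1) * ((t^2) ^ (k+1))) (step_hasSum n)
  rw [Finset.sum_range_succ, Finset.sum_range_one] at hps
  refine le_trans ?_ hps
  norm_num
  have htN : t = 1/(2*N+1) := ht
  have e2 : ((n:ℝ) + 2) = N + 1 := by rw [hN]; ring
  rw [e2, htN]
  rw [div_pow, one_pow, div_pow, one_pow, ← pow_mul]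
  norm_num
  have e : (12*N+1)⁻¹ - (12*(N+1)+1)⁻¹ = 12 / ((12*N+1)*(12*(N+1)+1)) := by
    field_simp; ring
  have e2 : 1/3*((2*N+1)^2)⁻¹ + 1/5*((2*N+1)^4)⁻¹ = (5*(2*N+1)^2+3)/(15*(2*N+1)^4) := by
    field_simp; ring
  have h12 : 12 / ((12*N+1)*(12*(N+1)+1)) ≤ (5*(2*N+1)^2+3)/(15*(2*N+1)^4) := by
    rw [div_le_div_iff₀ (by positivity) (by positivity)]
    nlinarith [mul_nonneg (sub_nonneg.2 hN1) (by positivity : (0:ℝ) ≤ N^2+N+1), hNpos.le,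
      sq_nonneg (N-1), mul_nonneg hNpos.le hNpos.le]
  linarith [e, e2, h12]



noncomputable def ell (n : ℕ) : ℝ := Real.log (Stirling.stirlingSeq (n+1))

lemma ell_tendsto : Tendsto ell atTop (𝓝 (Real.log (Real.sqrt π))) := by
  have h1 : Tendsto (fun n => Stirling.stirlingSeq (n+1)) atTop (𝓝 (Real.sqrt π)) :=
    Stirling.tendsto_stirlingSeq_sqrt_pi.comp (tendsto_add_atTop_nat 1)
  have hpos : Real.sqrt π ≠ 0 := by positivity
  exact ((Real.continuousAt_log hpos).tendsto.comp h1)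

lemma ell_upper (n : ℕ) : ell n ≤ Real.log (Real.sqrt π) + 1/(12*((n:ℝ)+1)) := by
  have hmono : Monotone (fun n : ℕ => ell n - 1/(12*((n:ℝ)+1))) := by
    apply monotone_nat_of_le_succ
    intro n
    have := step_upper n
    have e : ((n+1:ℕ):ℝ) + 1 = (n:ℝ) + 2 := by push_cast; ring
    simp only [ell, e]
    push_cast
    linarith [this]
  have hlim : Tendsto (fun n : ℕ => ell n - 1/(12*((n:ℝ)+1))) atTop (𝓝 (Real.log (Real.sqrt π))) := by
    have h2 : Tendsto (fun n : ℕ => 1/(12*((n:ℝ)+1))) atTop (𝓝 0) := by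
      have := tendsto_one_div_add_atTop_nhds_zero_nat.const_mul (1/12:ℝ)
      simp only [mul_zero] at this
      refine this.congr (fun n => by field_simp)
    simpa using ell_tendsto.sub h2
  have := hmono.ge_of_tendsto hlim n
  linarith [this]

lemma ell_lower (n : ℕ) : Real.log (Real.sqrt π) + 1/(12*((n:ℝ)+1)+1) ≤ ell n := by
  have hanti : Antitone (fun n : ℕ => ell n - 1/(12*((n:ℝ)+1)+1)) := by
    apply antitone_nat_of_succ_le
    intro n
    have := step_lower n
    have e : ((n+1:ℕ):ℝ) + 1 = (n:ℝ) + 2 := by push_cast; ring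
    simp only [ell, e]
    push_cast
    linarith [this]
  have hlim : Tendsto (fun n : ℕ => ell n - 1/(12*((n:ℝ)+1)+1)) atTop (𝓝 (Real.log (Real.sqrt π))) := by
    have h2' : Tendsto (fun n : ℕ => 1/(12*((n:ℝ)+1))) atTop (𝓝 0) := by
      have := tendsto_one_div_add_atTop_nhds_zero_nat.const_mul (1/12:ℝ)
      simp only [mul_zero] at this
      refine this.congr (fun n => by field_simp)
    have h2 : Tendsto (fun n : ℕ => 1/(12*((n:ℝ)+1)+1)) atTop (𝓝 0) := by
      apply squeeze_zero (fun n => by positivity) (fun n => ?_) h2'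
      apply one_div_le_one_div_of_le (by positivity)
      linarith
    simpa using ell_tendsto.sub h2
  have := hanti.le_of_tendsto hlim n
  linarith [this]



lemma logfac_eq (n : ℕ) (hn : 1 ≤ n) :
    Real.log (n.factorial : ℝ) = Real.log (Stirling.stirlingSeq n)
      + (1/2)*(Real.log 2 + Real.log n) + (n:ℝ)*Real.log n - n := by
  have h := Stirling.log_stirlingSeq_formula n
  have hn0 : (0:ℝ) < (n:ℝ) := by exact_mod_cast hn
  rw [Real.log_mul (by norm_num) hn0.ne', Real.log_div hn0.ne' (Real.exp_ne_zero 1),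
    Real.log_exp] at h
  linarith [h]

lemma sqrtpi_log : Real.log (Real.sqrt π) = (1/2) * Real.log π := by
  rw [Real.log_sqrt Real.pi_pos.le]; ring

lemma log2pi : Real.log (2*π) = Real.log 2 + Real.log π :=
  Real.log_mul (by norm_num) Real.pi_ne_zero

lemma robbinsU (n : ℕ) (hn : 1 ≤ n) :
    Real.log (n.factorial : ℝ) ≤ ((n:ℝ) + 1/2)*Real.log n - n + (1/2)*Real.log (2*π) + 1/(12*n) := by
  obtain ⟨m, rfl⟩ : ∃ m, n = m + 1 := ⟨n - 1, by omega⟩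
  have h1 := ell_upper m
  rw [ell] at h1
  have h2 := logfac_eq (m+1) hn
  rw [sqrtpi_log] at h1
  rw [log2pi]
  push_cast at h1 h2 ⊢
  linarith [h1, h2]

lemma robbinsL (n : ℕ) (hn : 1 ≤ n) :
    ((n:ℝ) + 1/2)*Real.log n - n + (1/2)*Real.log (2*π) + 1/(12*n+1) ≤ Real.log (n.factorial : ℝ) := by
  obtain ⟨m, rfl⟩ : ∃ m, n = m + 1 := ⟨n - 1, by omega⟩
  have h1 := ell_lower m
  rw [ell] at h1
  have h2 := logfac_eq (m+1) hn
  rw [sqrtpi_log] at h1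
  rw [log2pi]
  push_cast at h1 h2 ⊢
  linarith [h1, h2]



lemma numer_nonneg {d K : ℝ} (hd1 : 1 ≤ d) (hdK : d ≤ K - 1) (hK2 : 2 ≤ K) :
    0 ≤ 13*d*K - 12*d^2 - 2*K := by
  rcases le_or_gt d 2 with hcase | hcase
  · nlinarith [mul_nonneg (sub_nonneg.2 hcase) (by linarith : (0:ℝ) ≤ 6*d - 1),
      mul_nonneg (by linarith : (0:ℝ) ≤ K - 2) (by linarith : (0:ℝ) ≤ 13*d - 2)]
  · nlinarith [mul_nonneg (by linarith : (0:ℝ) ≤ d - 2) (by linarith : (0:ℝ) ≤ K - 1 - d),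
      mul_nonneg (by linarith : (0:ℝ) ≤ d - 2) (by linarith : (0:ℝ) ≤ K)]

lemma lemF {A K R : ℝ} (hA : 1 ≤ A) (hK : A + 1 ≤ K) (hR : K ≤ R) :
    (R + A/2)*Real.log A - (R + K/2)*Real.log K
      + ((K-A)/2)*(Real.log (2*π) + Real.log R) + 1/12 ≤ 0 := by
  have hA0 : (0:ℝ) < A := by linarith
  have hK0 : (0:ℝ) < K := by linarith
  have hR0 : (0:ℝ) < R := by linarith
  have hlAK : Real.log A - Real.log K ≤ A/K - 1 := by
    have h := Real.log_le_sub_one_of_pos (div_pos hA0 hK0)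
    rwa [Real.log_div hA0.ne' hK0.ne'] at h
  have hlRK : Real.log R - Real.log K ≤ R/K - 1 := by
    have h := Real.log_le_sub_one_of_pos (div_pos hR0 hK0)
    rwa [Real.log_div hR0.ne' hK0.ne'] at h
  -- Step 1 : value at R is at most value at K
  have hd1 : (R-K) * (Real.log A - Real.log K) ≤ (R-K)*(A/K - 1) :=
    mul_le_mul_of_nonneg_left hlAK (by linarith)
  have hd2 : ((K-A)/2)*(Real.log R - Real.log K) ≤ ((K-A)/2)*(R/K-1) :=
    mul_le_mul_of_nonneg_left hlRK (by linarith)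
  have hcomb : (R-K)*(A/K-1) + ((K-A)/2)*(R/K-1) ≤ 0 := by
    have he : (R-K)*(A/K-1) + ((K-A)/2)*(R/K-1) = -((R-K)*(K-A)/(2*K)) := by
      field_simp; ring
    rw [he, neg_nonpos]
    apply div_nonneg (mul_nonneg (by linarith) (by linarith)) (by linarith)
  -- Step 2 : value at K is ≤ 0
  have hstep2 : (K + A/2)*Real.log A - (K + K/2)*Real.log K
      + ((K-A)/2)*(Real.log (2*π) + Real.log K) + 1/12 ≤ 0 := by
    have he : (K + A/2)*Real.log A - (K + K/2)*Real.log K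
        + ((K-A)/2)*(Real.log (2*π) + Real.log K) + 1/12
        = -((K + A/2)*(Real.log K - Real.log A)) + ((K-A)/2)*Real.log (2*π) + 1/12 := by ring
    rw [he]
    have h1 : (K + A/2)*((K-A)/K) ≤ (K + A/2)*(Real.log K - Real.log A) := by
      apply mul_le_mul_of_nonneg_left ?_ (by linarith)
      have : (K-A)/K = 1 - A/K := by field_simp
      linarith [hlAK, this]
    have h2 : ((K-A)/2)*Real.log (2*π) ≤ ((K-A)/2)*(23/12) :=
      mul_le_mul_of_nonneg_left log2pi_le (by linarith)
    have h3 : ((K-A)/2)*(23/12) + 1/12 ≤ (K + A/2)*((K-A)/K) := by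
      rw [← sub_nonneg]
      have he2 : (K + A/2)*((K-A)/K) - ((K-A)/2*(23/12) + 1/12)
          = (13*(K-A)*K - 12*(K-A)^2 - 2*K) / (24*K) := by field_simp; ring
      rw [he2]
      apply div_nonneg ?_ (by linarith)
      exact numer_nonneg (by linarith) (by linarith) (by linarith)
    linarith [h1, h2, h3]
  have hiden : (R + A/2)*Real.log A - (R + K/2)*Real.log K
      + ((K-A)/2)*(Real.log (2*π) + Real.log R) + 1/12
      = ((K + A/2)*Real.log A - (K + K/2)*Real.log K
        + ((K-A)/2)*(Real.log (2*π) + Real.log K) + 1/12)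
        + ((R-K)*(Real.log A - Real.log K) + ((K-A)/2)*(Real.log R - Real.log K)) := by ring
  rw [hiden]
  linarith [hd1, hd2, hcomb, hstep2]



/-- **Maximal probability of the symmetric multinomial distribution.**
For positive integers `r ≥ k`, every point probability of `Mult(r, (1/k, …, 1/k))`
is at most `k^{k/2} / (2πr)^{(k-1)/2}`: for every vector `x` of non-negative
integers summing to `r`, `(r!/(x_1!⋯x_k!))·(1/k)^r ≤ k^{k/2}/(2πr)^{(k-1)/2}`. -/
theorem symmetric_multinomial_maxprob
    (r k : ℕ) (hk : 0 < k) (hr : k ≤ r)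
    (x : Fin k → ℕ) (hx : ∑ i, x i = r) :
    (r.factorial : ℝ) / (∏ i, ((x i).factorial : ℝ)) * (1 / (k : ℝ)) ^ r ≤
      (k : ℝ) ^ ((k : ℝ) / 2) / (2 * Real.pi * r) ^ (((k : ℝ) - 1) / 2) := by
  have hr1 : 1 ≤ r := le_trans hk hr
  have hR0 : (0:ℝ) < (r:ℝ) := by exact_mod_cast hr1
  have hK0 : (0:ℝ) < (k:ℝ) := by exact_mod_cast hk
  rcases eq_or_lt_of_le (show 1 ≤ k from hk) with hk1 | hk2
  · -- k = 1
    subst hk1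
    have hx0 : x 0 = r := by rw [← hx, Fin.sum_univ_one]
    rw [Fin.prod_univ_one, hx0]
    have e0 : (((1:ℕ):ℝ) - 1)/2 = 0 := by norm_num
    rw [e0, Real.rpow_zero]
    have e1 : ((1:ℕ):ℝ) = (1:ℝ) := Nat.cast_one
    rw [e1, Real.one_rpow]
    rw [div_self (by exact_mod_cast r.factorial_pos : (0:ℝ) < (r.factorial:ℝ)).ne']
    norm_num
  · -- 2 ≤ k
    have hk2' : 2 ≤ k := hk2
    set S : Finset (Fin k) := Finset.univ.filter (fun i => x i ≠ 0) with hS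
    have hprod : ∏ i, ((x i).factorial : ℝ) = ∏ i ∈ S, ((x i).factorial : ℝ) := by
      rw [hS]
      symm
      apply Finset.prod_filter_of_ne
      intro i _ hne h0
      apply hne
      rw [h0]
      norm_num
    have hsumS : ∑ i ∈ S, x i = r := by
      rw [hS, Finset.sum_filter_of_ne (fun i _ h => h), hx]
    have hSne : S.Nonempty := by
      by_contra h
      rw [Finset.not_nonempty_iff_eq_empty] at h
      rw [h, Finset.sum_empty] at hsumS
      omega
    have hy : ∀ i ∈ S, 1 ≤ x i := by
      intro i hi
      rw [hS, Finset.mem_filter] at hi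
      omega
    have ha1 : 1 ≤ S.card := Finset.card_pos.2 hSne
    have hak : S.card ≤ k := le_trans (Finset.card_filter_le _ _) (le_of_eq (Finset.card_fin k))
    have haR : S.card ≤ r := by
      calc S.card = ∑ _i ∈ S, 1 := by rw [Finset.sum_const, smul_eq_mul, mul_one]
        _ ≤ ∑ i ∈ S, x i := Finset.sum_le_sum hy
        _ = r := hsumS
    set A : ℝ := (S.card : ℝ) with hA
    have hA1 : (1:ℝ) ≤ A := by rw [hA]; exact_mod_cast ha1
    have hAK : A ≤ (k:ℝ) := by rw [hA]; exact_mod_cast hak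
    have hAR : A ≤ (r:ℝ) := by rw [hA]; exact_mod_cast haR
    -- positivity
    have hfacpos : ∀ i, (0:ℝ) < ((x i).factorial : ℝ) :=
      fun i => by exact_mod_cast (x i).factorial_pos
    have hprodpos : (0:ℝ) < ∏ i, ((x i).factorial : ℝ) := Finset.prod_pos (fun i _ => hfacpos i)
    have hrfacpos : (0:ℝ) < (r.factorial : ℝ) := by exact_mod_cast r.factorial_pos
    have hLHS0 : (0:ℝ) < (r.factorial : ℝ) / (∏ i, ((x i).factorial : ℝ)) * (1 / (k : ℝ)) ^ r := by
      positivity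
    have h2pir : (0:ℝ) < 2 * Real.pi * r := by positivity
    have hRHS0 : (0:ℝ) < (k : ℝ) ^ ((k : ℝ) / 2) / (2 * Real.pi * r) ^ (((k : ℝ) - 1) / 2) := by
      positivity
    rw [← Real.log_le_log_iff hLHS0 hRHS0]
    -- expand left log
    have hlogL : Real.log ((r.factorial : ℝ) / (∏ i, ((x i).factorial : ℝ)) * (1 / (k : ℝ)) ^ r)
        = Real.log (r.factorial : ℝ) - (∑ i ∈ S, Real.log ((x i).factorial : ℝ))
          - (r:ℝ) * Real.log k := by
      rw [Real.log_mul (by positivity) (by positivity), Real.log_div hrfacpos.ne' hprodpos.ne',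
        Real.log_pow, hprod, Real.log_prod (fun i hi => (hfacpos i).ne'), one_div,
        Real.log_inv]
      ring
    have hlogR : Real.log ((k : ℝ) ^ ((k : ℝ) / 2) / (2 * Real.pi * r) ^ (((k : ℝ) - 1) / 2))
        = ((k:ℝ)/2) * Real.log k - (((k:ℝ)-1)/2) * (Real.log (2*π) + Real.log r) := by
      rw [Real.log_div (by positivity) (by positivity), Real.log_rpow hK0,
        Real.log_rpow h2pir, Real.log_mul (by positivity) hR0.ne']
    rw [hlogL, hlogR]
    -- upper bound log r!
    have hU := robbinsU r hr1
    -- lower bound each factorial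
    have hterm : ∀ i ∈ S, ((x i:ℝ) + 1/2)*Real.log (x i) - (x i) + (1/2)*Real.log (2*π)
        + 1/(13*(r:ℝ)) ≤ Real.log ((x i).factorial : ℝ) := by
      intro i hi
      have h1 := robbinsL (x i) (hy i hi)
      have hxi1 : (1:ℝ) ≤ (x i : ℝ) := by exact_mod_cast hy i hi
      have hxiR : (x i : ℝ) ≤ (r:ℝ) := by
        have : x i ≤ r := hsumS ▸ Finset.single_le_sum (fun j _ => Nat.zero_le (x j)) hi
        exact_mod_cast this
      have h2 : 1/(13*(r:ℝ)) ≤ 1/(12*(x i:ℝ)+1) := by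
        apply one_div_le_one_div_of_le (by positivity)
        linarith
      linarith
    have hsum2 := Finset.sum_le_sum hterm
    have hsum3 : ∑ i ∈ S, (((x i:ℝ) + 1/2)*Real.log (x i) - (x i) + (1/2)*Real.log (2*π)
        + 1/(13*(r:ℝ)))
        = (∑ i ∈ S, ((x i:ℝ) + 1/2)*Real.log (x i)) - (r:ℝ) + A*((1/2)*Real.log (2*π))
          + A*(1/(13*(r:ℝ))) := by
      rw [Finset.sum_add_distrib, Finset.sum_add_distrib, Finset.sum_sub_distrib,
        Finset.sum_const, Finset.sum_const, nsmul_eq_mul, nsmul_eq_mul]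
      have : ∑ i ∈ S, ((x i : ℕ) : ℝ) = (r:ℝ) := by
        rw [← Nat.cast_sum, hsumS]
      rw [this, ← hA]
    -- Jensen
    have hjen := jensen S x hy hSne
    have hsumcast : ∑ i ∈ S, ((x i : ℕ) : ℝ) = (r:ℝ) := by rw [← Nat.cast_sum, hsumS]
    rw [hsumcast, ← hA] at hjen
    -- core inequality
    have hcore : ((r:ℝ) + A/2)*Real.log A - ((r:ℝ) + (k:ℝ)/2)*Real.log k
        + (((k:ℝ)-A)/2)*(Real.log (2*π) + Real.log r) + 1/(12*(r:ℝ)) - A*(1/(13*(r:ℝ))) ≤ 0 := by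
      rcases eq_or_lt_of_le hAK with hAk | hAk
      · -- A = k
        rw [hAk]
        have hk2R : (2:ℝ) ≤ (k:ℝ) := by exact_mod_cast hk2'
        have hkr : (1:ℝ)/(12*(r:ℝ)) ≤ (k:ℝ)*(1/(13*(r:ℝ))) := by
          rw [mul_one_div, div_le_div_iff₀ (by positivity) (by positivity)]
          nlinarith
        linarith [hkr]
      · -- A < k hence A + 1 ≤ K
        have hA1K : A + 1 ≤ (k:ℝ) := by
          rw [hA] at hAk ⊢
          have h1 : S.card < k := by exact_mod_cast hAk
          have h2 : S.card + 1 ≤ k := h1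
          exact_mod_cast h2
        have hF := lemF hA1 hA1K (by exact_mod_cast hr : (k:ℝ) ≤ (r:ℝ))
        have h12 : 1/(12*(r:ℝ)) - A*(1/(13*(r:ℝ))) ≤ 1/12 := by
          have h1 : 1/(12*(r:ℝ)) ≤ 1/12 := by
            apply one_div_le_one_div_of_le (by norm_num)
            linarith
          have h2 : (0:ℝ) ≤ A*(1/(13*(r:ℝ))) := by positivity
          linarith
        linarith [hF, h12]
    linarith [hU, hsum2, hsum3, hjen, hcore]
end

section
/- Let P be a non-atomic probability distribution on ℝ with finite variance σ_P², let p ∈ (0,1), and let x_p be a point with Pr_{X∼P}[X < x_p] = p (such a point exists since the cumulative distribution function of a non-atomic distribution is continuous). Then the conditional distribution of P on [x_p, ∞) has variance at most σ_P²/(1 − p). -/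
open MeasureTheory ProbabilityTheory

/-! The conditional variance on `s` is at most the conditional mean squared deviation from the
unconditional mean `μ[X]`, which is `1 / μ(s)` times the integral of a nonnegative function over `s`,
hence at most `Var[X; μ] / μ(s)`. For the upper tail at a `p`-th quantile, `μ(s) = 1 - p`. -/

variable {Ω : Type*} {mΩ : MeasurableSpace Ω} {μ : Measure Ω} {X : Ω → ℝ}

lemma variance_le_integral_sub_sq [IsProbabilityMeasure μ] (hX : AEStronglyMeasurable X μ)
    (c : ℝ) : Var[X; μ] ≤ ∫ ω, (X ω - c) ^ 2 ∂μ := by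
  rw [← variance_sub_const hX c]
  exact variance_le_expectation_sq (hX.aemeasurable.sub_const c).aestronglyMeasurable

lemma variance_cond_le_div [IsFiniteMeasure μ] (hX : MemLp X 2 μ) (s : Set Ω) :
    Var[X; μ[|s]] ≤ Var[X; μ] / μ.real s := by
  by_cases hs : μ s = 0
  · simp [cond_eq_zero_of_meas_eq_zero hs, measureReal_def, hs]
  have : IsProbabilityMeasure μ[|s] := cond_isProbabilityMeasure hs
  have hsq : Integrable (fun ω ↦ (X ω - μ[X]) ^ 2) μ :=
    (hX.sub (memLp_const μ[X])).integrable_sq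
  calc Var[X; μ[|s]]
      ≤ ∫ ω, (X ω - μ[X]) ^ 2 ∂μ[|s] :=
        variance_le_integral_sub_sq
          (hX.aestronglyMeasurable.mono_ac (cond_absolutelyContinuous)) _
    _ = (μ.real s)⁻¹ * ∫ ω in s, (X ω - μ[X]) ^ 2 ∂μ := by
        rw [ProbabilityTheory.cond, integral_smul_measure, smul_eq_mul, ENNReal.toReal_inv, measureReal_def]
    _ ≤ (μ.real s)⁻¹ * ∫ ω, (X ω - μ[X]) ^ 2 ∂μ := by
        exact mul_le_mul_of_nonneg_left
          (setIntegral_le_integral hsq (.of_forall fun _ ↦ sq_nonneg _)) (by positivity)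
    _ = Var[X; μ] / μ.real s := by
        rw [variance_eq_integral hX.aestronglyMeasurable.aemeasurable, inv_mul_eq_div]

theorem conditional_variance_bound_general
    (P : Measure ℝ) [IsProbabilityMeasure P]
    (hL2 : MemLp id 2 P)
    (p : ℝ) (hp : p ∈ Set.Ioo (0 : ℝ) 1)
    (xp : ℝ) (hxp : P {y : ℝ | y < xp} = ENNReal.ofReal p) :
    variance id (ProbabilityTheory.cond P (Set.Ici xp)) ≤ variance id P / (1 - p) := by
  have htail : P.real (Set.Ici xp) = 1 - p := by
    rw [← Set.compl_Iio, probReal_compl_eq_one_sub measurableSet_Iio, measureReal_def,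
      show P (Set.Iio xp) = _ from hxp, ENNReal.toReal_ofReal hp.1.le]
  simpa [htail] using variance_cond_le_div hL2 (Set.Ici xp)

/-- **Variance bound for the upper-tail conditional distribution.**
Let `P` be a non-atomic probability distribution on `ℝ` with finite variance, let
`p ∈ (0,1)`, and let `x_p` be a point with `Pr_{X∼P}[X < x_p] = p`. Then the
conditional distribution of `P` on `[x_p, ∞)` has variance at most
`Var(P)/(1 - p)`. -/
theorem conditional_variance_bound
    (P : Measure ℝ) [IsProbabilityMeasure P]
    (hatom : ∀ x : ℝ, P {x} = 0)
    (hL2 : MemLp id 2 P)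
    (p : ℝ) (hp : p ∈ Set.Ioo (0 : ℝ) 1)
    (xp : ℝ) (hxp : P {y : ℝ | y < xp} = ENNReal.ofReal p) :
    variance id (ProbabilityTheory.cond P (Set.Ici xp)) ≤ variance id P / (1 - p) :=
  conditional_variance_bound_general P hL2 p hp xp hxp
end

section
/- Let P' be a non-atomic probability distribution on ℝ with finite positive standard deviation σ', and let ξ > 0. If Y₁ and Y₂ are independent random variables each distributed according to P', then Pr[|Y₁ − Y₂| < ξ] ≥ min{1/8, ξ/(32σ')}. -/
/-!
By Chebyshev's inequality at least `3/4` of the mass of `P'` lies in the window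
`|x - m| < 2σ'` around the mean `m`. Cutting this window into `N = ⌈4σ'/ξ⌉` cells of width `ξ`,
two samples falling into the same cell are `ξ`-close, and by Cauchy–Schwarz the probability
that they do is at least `(3/4)² / N`, which dominates `min (1/8) (ξ/(32σ'))`.
-/

open MeasureTheory ProbabilityTheory

open Finset in
theorem sq_measureReal_preimage_le_card_mul_prod {α ι : Type*} [MeasurableSpace α]
    [MeasurableSpace ι] [MeasurableSingletonClass ι] (μ : Measure α) [IsFiniteMeasure μ]
    {g : α → ι} (hg : Measurable g) (s : Finset ι) :
    μ.real (g ⁻¹' s) ^ 2 ≤ #s * (μ.prod μ).real {p | g p.1 = g p.2} := by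
  have hfib : ∀ i ∈ s, MeasurableSet (g ⁻¹' {i}) := fun i _ => hg (measurableSet_singleton i)
  have hdisj : (s : Set ι).PairwiseDisjoint fun i => g ⁻¹' {i} :=
    (Set.pairwiseDisjoint_fiber g _).subset (Set.subset_univ _)
  have hcells : g ⁻¹' s = ⋃ i ∈ s, g ⁻¹' {i} := by
    rw [← Finset.set_biUnion_coe, Set.biUnion_preimage_singleton]
  have hsquares : ⋃ i ∈ s, (g ⁻¹' {i}) ×ˢ (g ⁻¹' {i}) ⊆ {p : α × α | g p.1 = g p.2} := by
    intro p hp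
    simp only [Set.mem_iUnion, Set.mem_prod, Set.mem_preimage, Set.mem_singleton_iff] at hp
    obtain ⟨i, -, h₁, h₂⟩ := hp
    exact h₁.trans h₂.symm
  calc μ.real (g ⁻¹' s) ^ 2 = (∑ i ∈ s, μ.real (g ⁻¹' {i})) ^ 2 := by
        rw [hcells, measureReal_biUnion_finset hdisj hfib]
    _ ≤ #s * ∑ i ∈ s, μ.real (g ⁻¹' {i}) ^ 2 := sq_sum_le_card_mul_sum_sq
    _ = #s * (μ.prod μ).real (⋃ i ∈ s, (g ⁻¹' {i}) ×ˢ (g ⁻¹' {i})) := by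
        rw [measureReal_biUnion_finset
          (fun i hi j hj hij => Set.disjoint_prod.2 (Or.inl (hdisj hi hj hij)))
          (fun i hi => (hfib i hi).prod (hfib i hi))]
        simp only [measureReal_prod_prod, sq]
    _ ≤ #s * (μ.prod μ).real {p | g p.1 = g p.2} :=
        mul_le_mul_of_nonneg_left (measureReal_mono hsquares) (Nat.cast_nonneg _)

theorem one_sub_variance_div_sq_le_measureReal_abs_sub_lt {Ω : Type*} [MeasurableSpace Ω]
    {μ : Measure Ω} [IsProbabilityMeasure μ] {X : Ω → ℝ} (hX : MemLp X 2 μ) {c : ℝ}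
    (hc : 0 < c) : 1 - variance X μ / c ^ 2 ≤ μ.real {ω | |X ω - μ[X]| < c} := by
  have hfar := ENNReal.toReal_mono ENNReal.ofReal_ne_top (meas_ge_le_variance_div_sq hX hc)
  rw [← measureReal_def, ENNReal.toReal_ofReal (div_nonneg (variance_nonneg X μ) (sq_nonneg c))]
    at hfar
  have hunion : Set.univ = {ω | c ≤ |X ω - μ[X]|} ∪ {ω | |X ω - μ[X]| < c} := by
    ext ω
    simp [le_or_gt]
  have hsplit := measureReal_union_le (μ := μ) {ω | c ≤ |X ω - μ[X]|} {ω | |X ω - μ[X]| < c}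
  rw [← hunion, probReal_univ] at hsplit
  linarith

section FloorRing

variable {K : Type*} [Field K] [LinearOrder K] [IsStrictOrderedRing K] [FloorRing K]

theorem abs_sub_lt_of_floor_div_eq {a ξ x y : K} (hξ : 0 < ξ)
    (h : ⌊(x - a) / ξ⌋ = ⌊(y - a) / ξ⌋) : |x - y| < ξ := by
  have := Int.abs_sub_lt_one_of_floor_eq_floor h
  rwa [← sub_div, sub_sub_sub_cancel_right, abs_div, abs_of_pos hξ, div_lt_one hξ] at this

theorem floor_sub_div_mem_Ico {a ξ x : K} {n : ℕ} (hξ : 0 < ξ)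
    (hx : x ∈ Set.Ico a (a + n * ξ)) : ⌊(x - a) / ξ⌋ ∈ Finset.Ico (0 : ℤ) n := by
  rw [Finset.mem_Ico, Int.floor_nonneg, Int.floor_lt, Int.cast_natCast, le_div_iff₀ hξ,
    div_lt_iff₀ hξ]
  constructor <;> linarith [hx.1, hx.2]

end FloorRing

theorem min_mul_natCeil_le {σ ξ : ℝ} (hσ : 0 < σ) (hξ : 0 < ξ) :
    min (1 / 8) (ξ / (32 * σ)) * ⌈4 * σ / ξ⌉₊ ≤ 1 / 4 := by
  have hceil : (⌈4 * σ / ξ⌉₊ : ℝ) < 4 * σ / ξ + 1 := Nat.ceil_lt_add_one (by positivity)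
  rcases le_or_gt (4 * σ / ξ) 1 with hsmall | hlarge
  · calc min (1 / 8) (ξ / (32 * σ)) * ⌈4 * σ / ξ⌉₊ ≤ 1 / 8 * 2 := by
          gcongr
          · exact min_le_left _ _
          · linarith
      _ = 1 / 4 := by norm_num
  · calc min (1 / 8) (ξ / (32 * σ)) * ⌈4 * σ / ξ⌉₊ ≤ ξ / (32 * σ) * (2 * (4 * σ / ξ)) := by
          gcongr
          · exact min_le_right _ _
          · linarith
      _ = 1 / 4 := by field_simp; norm_num

theorem iid_close_prob_lower_bound_general
    (P' : Measure ℝ) [IsProbabilityMeasure P']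
    (hL2 : MemLp id 2 P')
    (σ' : ℝ) (hσ : 0 < σ') (hvar : variance id P' = σ' ^ 2)
    (ξ : ℝ) (hξ : 0 < ξ) :
    ((P'.prod P') {y : ℝ × ℝ | |y.1 - y.2| < ξ}).toReal ≥
      min (1 / 8) (ξ / (32 * σ')) := by
  set a := P'[id] - 2 * σ'
  set N := ⌈4 * σ' / ξ⌉₊
  set cell : ℝ → ℤ := fun x => ⌊(x - a) / ξ⌋
  have hcell : Measurable cell := ((measurable_id.sub_const a).div_const ξ).floor
  have hN : 4 * σ' ≤ N * ξ := (div_le_iff₀ hξ).1 (Nat.le_ceil _)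
  have hNpos : (0 : ℝ) < N := by positivity
  have hcover : {x | |id x - P'[id]| < 2 * σ'} ⊆ cell ⁻¹' (Finset.Ico 0 N : Finset ℤ) := by
    intro x hx
    rw [Set.mem_ofPred_eq, id, abs_sub_lt_iff] at hx
    exact floor_sub_div_mem_Ico hξ ⟨by linarith, by linarith⟩
  have hclose : {p : ℝ × ℝ | cell p.1 = cell p.2} ⊆ {y | |y.1 - y.2| < ξ} :=
    fun p hp => abs_sub_lt_of_floor_div_eq hξ hp
  have hcheb := one_sub_variance_div_sq_le_measureReal_abs_sub_lt hL2 (by positivity : 0 < 2 * σ')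
  rw [hvar, mul_pow, div_mul_cancel_right₀ (by positivity)] at hcheb
  have hcollide : (3 / 4) ^ 2 ≤ N * (P'.prod P').real {y : ℝ × ℝ | |y.1 - y.2| < ξ} :=
    calc (3 / 4) ^ 2 ≤ P'.real (cell ⁻¹' (Finset.Ico 0 N : Finset ℤ)) ^ 2 := by
          gcongr
          linarith [measureReal_mono (μ := P') hcover]
      _ ≤ N * (P'.prod P').real {p | cell p.1 = cell p.2} := by
          simpa using sq_measureReal_preimage_le_card_mul_prod P' hcell (Finset.Ico 0 N)
      _ ≤ N * (P'.prod P').real {y : ℝ × ℝ | |y.1 - y.2| < ξ} :=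
          mul_le_mul_of_nonneg_left (measureReal_mono hclose) hNpos.le
  rw [← measureReal_def, ge_iff_le]
  refine le_of_mul_le_mul_right ?_ hNpos
  nlinarith [min_mul_natCeil_le hσ hξ]

/-- **Two i.i.d. samples are close with non-negligible probability.**
Let `P'` be a non-atomic probability distribution on `ℝ` with finite positive
standard deviation `σ'`, and let `ξ > 0`. If `Y₁, Y₂` are independent with law `P'`
(modeled by the product measure `P'.prod P'`), then
`Pr[|Y₁ - Y₂| < ξ] ≥ min {1/8, ξ/(32σ')}`. -/
theorem iid_close_prob_lower_bound
    (P' : Measure ℝ) [IsProbabilityMeasure P']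
    (hatom : ∀ x : ℝ, P' {x} = 0)
    (hL2 : MemLp id 2 P')
    (σ' : ℝ) (hσ : 0 < σ') (hvar : variance id P' = σ' ^ 2)
    (ξ : ℝ) (hξ : 0 < ξ) :
    ((P'.prod P') {y : ℝ × ℝ | |y.1 - y.2| < ξ}).toReal ≥
      min (1 / 8) (ξ / (32 * σ')) :=
  iid_close_prob_lower_bound_general P' hL2 σ' hσ hvar ξ hξ
end

section
/- Let P be a non-atomic probability distribution on ℝ with finite positive standard deviation σ_P, let k ≥ 2, and let Z₁, Z₂, …, Z_k be independent random variables each distributed according to P. Then for any ξ > 0, Pr[Z₁ > Z_j for all j ∈ {2, …, k} and Z₁ − Z_k ≤ ξ] ≥ (1/(16k²)) · min{1/8, ξ/(64 σ_P √k)}. -/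
/-!
Let `F` be the CDF of `P`; it is continuous since `P` has no atoms. By Chebyshev at radius
`2σ√k` all but `1/(4k)` of the mass lies within `2σ√k` of the mean, so the
`(1 - 1/(2k))`-quantile `m` satisfies `F (m + 4σ√k) - F m ≥ 1/(4k)`. Cut `[m, m + Nξ]`,
`N = ⌈4σ√k/ξ⌉`, into rungs of width `ξ` carrying masses `p_n`, and split each rung into two
halves of mass `p_n/2`. The events "`Z₁` in the upper half and `Z_k` in the lower half of rung
`n`, every other `Z_j ≤ m`" are disjoint, lie in the target event and have probability
`(p_n/2)² F(m)^(k-2)`. Bernoulli gives `F(m)^(k-2) ≥ 1/2`, and Cauchy–Schwarz gives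
`∑ p_n² ≥ (∑ p_n)²/N ≥ 1/(16k²N)`.
-/

open MeasureTheory ProbabilityTheory Set Function

lemma sq_sub_le_mul_sum_sq_sub (f : ℕ → ℝ) (N : ℕ) :
    (f N - f 0) ^ 2 ≤ N * ∑ n ∈ Finset.range N, (f (n + 1) - f n) ^ 2 := by
  have h := sq_sum_le_card_mul_sum_sq (s := Finset.range N) (f := fun n ↦ f (n + 1) - f n)
  rwa [Finset.sum_range_sub, Finset.card_range] at h

lemma one_half_le_one_sub_inv_two_mul_pow (k : ℕ) : 1 / 2 ≤ (1 - 1 / (2 * k : ℝ)) ^ k := by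
  rcases Nat.eq_zero_or_pos k with rfl | hk
  · norm_num
  have hk' : (1 : ℝ) ≤ k := by exact_mod_cast hk
  have hle : 1 / (2 * k : ℝ) ≤ 1 := by rw [div_le_one (by positivity)]; linarith
  have h := one_add_mul_le_pow (a := -(1 / (2 * k : ℝ))) (by linarith) k
  rw [← sub_eq_add_neg] at h
  calc (1 : ℝ) / 2 = 1 + k * -(1 / (2 * k)) := by field_simp; ring
    _ ≤ _ := h

lemma min_one_inv_two_mul_le_inv_ceil {t : ℝ} (ht : 0 < t) :
    min 1 (2 * t)⁻¹ ≤ (⌈t⌉₊ : ℝ)⁻¹ := by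
  rcases le_or_gt t 2⁻¹ with ht2 | ht2
  · rw [Nat.ceil_eq_iff one_ne_zero |>.2 ⟨by norm_num [ht], by norm_num; linarith⟩]
    simp
  · exact (min_le_right _ _).trans <| inv_anti₀ (by positivity) (Nat.ceil_lt_two_mul ht2).le

namespace ProbabilityTheory

variable {P : Measure ℝ} [IsProbabilityMeasure P]

lemma continuous_cdf [NullSingletonClass P] : Continuous (cdf P) := by
  refine continuous_iff_continuousAt.2 fun x ↦ ?_
  rw [(monotone_cdf P).continuousAt_iff_leftLim_eq_rightLim, (cdf P).rightLim_eq]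
  have hx : (cdf P).measure {x} = 0 := by rw [measure_cdf]; exact measure_singleton x
  rw [StieltjesFunction.measure_singleton, ENNReal.ofReal_eq_zero] at hx
  exact le_antisymm ((monotone_cdf P).leftLim_le le_rfl) (by linarith)

lemma measureReal_Ioc_eq_cdf_sub {a b : ℝ} (hab : a ≤ b) :
    P.real (Ioc a b) = cdf P b - cdf P a := by
  have h := (cdf P).measure_Ioc a b
  rw [measure_cdf] at h
  rw [measureReal_def, h, ENNReal.toReal_ofReal (sub_nonneg.2 (monotone_cdf P hab))]

lemma exists_mem_Icc_cdf_eq_midpoint [NullSingletonClass P] {a b : ℝ} (hab : a ≤ b) :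
    ∃ s ∈ Icc a b, cdf P s = (cdf P a + cdf P b) / 2 :=
  intermediate_value_Icc hab continuous_cdf.continuousOn
    ⟨by linarith [monotone_cdf P hab], by linarith [monotone_cdf P hab]⟩

lemma exists_cdf_eq [NullSingletonClass P] {q : ℝ} (hq0 : 0 < q) (hq1 : q < 1) :
    ∃ m, cdf P m = q :=
  mem_range_of_exists_le_of_exists_ge continuous_cdf
    (((tendsto_cdf_atBot P).eventually (gt_mem_nhds hq0)).exists.imp fun _ ↦ le_of_lt)
    (((tendsto_cdf_atTop P).eventually (lt_mem_nhds hq1)).exists.imp fun _ ↦ le_of_lt)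

lemma one_sub_variance_div_sq_le_cdf_sub (hX : MemLp id 2 P) {r : ℝ} (hr : 0 < r) :
    1 - variance id P / r ^ 2 ≤ cdf P (P[id] + r) - cdf P (P[id] - r) := by
  have hsub : (Ioc (P[id] - r) (P[id] + r))ᶜ ⊆ {x | r ≤ |id x - P[id]|} := by
    intro x hx
    simp only [mem_compl_iff, mem_Ioc, not_and_or, not_lt, not_le, id_eq] at hx
    simp only [mem_ofPred_eq, id_eq, le_abs]
    rcases hx with hx | hx
    · right; linarith
    · left; linarith
  have hcheb : P.real (Ioc (P[id] - r) (P[id] + r))ᶜ ≤ variance id P / r ^ 2 := by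
    rw [measureReal_def, ← ENNReal.toReal_ofReal (div_nonneg (variance_nonneg _ _) (sq_nonneg r))]
    exact ENNReal.toReal_mono ENNReal.ofReal_ne_top
      ((measure_mono hsub).trans (meas_ge_le_variance_div_sq hX hr))
  rw [measureReal_compl measurableSet_Ioc, probReal_univ,
    measureReal_Ioc_eq_cdf_sub (by linarith)] at hcheb
  linarith

lemma exists_cdf_eq_and_le_cdf_add_sub [NullSingletonClass P] (hX : MemLp id 2 P) {r q : ℝ}
    (hr : 0 < r) (hq0 : variance id P / r ^ 2 < q) (hq1 : q < 1) :
    ∃ m, cdf P m = q ∧ 1 - variance id P / r ^ 2 - q ≤ cdf P (m + 2 * r) - cdf P m := by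
  have hv : 0 ≤ variance id P / r ^ 2 := div_nonneg (variance_nonneg _ _) (sq_nonneg r)
  obtain ⟨m, hm⟩ := exists_cdf_eq (P := P) (hv.trans_lt hq0) hq1
  have hcheb := one_sub_variance_div_sq_le_cdf_sub hX hr
  have hm_gt : P[id] - r < m := by
    by_contra! h
    linarith [monotone_cdf P h, cdf_le_one P (P[id] + r)]
  refine ⟨m, hm, ?_⟩
  linarith [monotone_cdf P (show P[id] + r ≤ m + 2 * r by linarith), cdf_nonneg P (P[id] - r)]

lemma exists_cdf_eq_and_le_cdf_add_sub_of_variance_eq [NullSingletonClass P] (hX : MemLp id 2 P)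
    {σ k : ℝ} (hσ : 0 < σ) (hvar : variance id P = σ ^ 2) (hk : 1 ≤ k) :
    ∃ m, cdf P m = 1 - 1 / (2 * k) ∧ 1 / (4 * k) ≤ cdf P (m + 4 * σ * √k) - cdf P m := by
  have hr : 0 < 2 * σ * √k := by positivity
  have hv : variance id P / (2 * σ * √k) ^ 2 = 1 / (4 * k) := by
    rw [hvar, mul_pow, mul_pow, Real.sq_sqrt (by positivity)]
    field_simp
    ring
  have hx : 0 < 1 / (4 * k) := by positivity
  have hx4 : 1 / (4 * k) ≤ 1 / 4 := one_div_le_one_div_of_le (by norm_num) (by linarith)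
  have hq : 1 / (2 * k) = 2 * (1 / (4 * k)) := by ring
  obtain ⟨m, hm, hgap⟩ := exists_cdf_eq_and_le_cdf_add_sub hX hr (q := 1 - 1 / (2 * k))
    (by rw [hv, hq]; linarith) (by rw [hq]; linarith)
  refine ⟨m, hm, ?_⟩
  rw [hv, hq, show 2 * (2 * σ * √k) = 4 * σ * √k by ring] at hgap
  linarith

section Ladder

variable {ι : Type*} [Fintype ι] [DecidableEq ι]

lemma prod_update_update_const {M : Type*} [CommMonoid M] {i j : ι} (hij : i ≠ j) (a b c : M) :
    ∏ l, update (update (fun _ ↦ c) i a) j b l = a * b * c ^ (Fintype.card ι - 2) := by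
  have hi : i ∈ (Finset.univ : Finset ι) \ {j} := by simp [hij]
  rw [Finset.prod_update_of_mem (Finset.mem_univ j), Finset.prod_update_of_mem hi,
    Finset.prod_const, Finset.card_sdiff_of_subset (by simpa using hi),
    Finset.card_sdiff_of_subset (by simp), Finset.card_singleton, Finset.card_singleton,
    Finset.card_univ, Nat.sub_sub, mul_left_comm, mul_assoc]

lemma measureReal_pi_update_update {i j : ι} (hij : i ≠ j) (S T U : Set ℝ) :
    (Measure.pi fun _ : ι ↦ P).real (univ.pi (update (update (fun _ ↦ U) i S) j T)) =
      P.real S * P.real T * P.real U ^ (Fintype.card ι - 2) := by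
  have hupd : ∀ l, P (update (update (fun _ ↦ U) i S) j T l) =
      update (update (fun _ ↦ P U) i (P S)) j (P T) l := fun l ↦ by
    simp only [update_apply]; split_ifs <;> rfl
  simp only [measureReal_def, Measure.pi_pi, hupd, prod_update_update_const hij,
    ENNReal.toReal_mul, ENNReal.toReal_pow]

lemma cdf_pow_mul_sum_sq_cdf_sub_le_measureReal [NullSingletonClass P] {i j : ι} (hij : i ≠ j)
    {ξ : ℝ} {a : ℕ → ℝ} (ha : Monotone a) (hξ : ∀ n, a (n + 1) ≤ a n + ξ) (N : ℕ) :
    cdf P (a 0) ^ (Fintype.card ι - 2) / 4 *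
        ∑ n ∈ Finset.range N, (cdf P (a (n + 1)) - cdf P (a n)) ^ 2 ≤
      (Measure.pi fun _ : ι ↦ P).real
        {z | (∀ l, l ≠ i → z i > z l) ∧ z i - z j ≤ ξ} := by
  choose s hs hs_cdf using fun n : ℕ ↦ exists_mem_Icc_cdf_eq_midpoint (P := P) (ha n.le_succ)
  -- `E n`: coordinate `i` in the upper half of the rung `[a n, a (n + 1)]`, coordinate `j` in its
  -- lower half, all other coordinates below the ladder.
  set E : ℕ → Set (ι → ℝ) := fun n ↦ univ.pi
    (update (update (fun _ ↦ Iic (a 0)) i (Ioc (s n) (a (n + 1)))) j (Ioc (a n) (s n)))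
  have hE_mem : ∀ n z, z ∈ E n → z i ∈ Ioc (s n) (a (n + 1)) ∧ z j ∈ Ioc (a n) (s n) ∧
      ∀ l, l ≠ i → l ≠ j → z l ≤ a 0 := by
    intro n z
    simp only [E, mem_univ_pi]
    exact fun h ↦ ⟨by simpa [update_of_ne hij] using h i, by simpa using h j,
      fun l hli hlj ↦ by simpa [update_of_ne hli, update_of_ne hlj] using h l⟩
  have hE : ∀ n, (Measure.pi fun _ : ι ↦ P).real (E n) =
      cdf P (a 0) ^ (Fintype.card ι - 2) / 4 * (cdf P (a (n + 1)) - cdf P (a n)) ^ 2 := by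
    intro n
    rw [measureReal_pi_update_update hij, measureReal_Ioc_eq_cdf_sub (hs n).2,
      measureReal_Ioc_eq_cdf_sub (hs n).1, ← cdf_eq_real, hs_cdf]
    ring
  have hdisj : PairwiseDisjoint (Finset.range N : Set ℕ) E := by
    refine ((pairwise_disjoint_on E).2 fun n n' hnn' ↦
      Set.disjoint_left.2 fun z hz hz' ↦ ?_).set_pairwise _
    have h₁ := (hE_mem n z hz).2.1.2
    have h₂ := (hE_mem n' z hz').2.1.1
    linarith [(hs n).2, ha (Nat.succ_le_of_lt hnn')]
  have hsub : ⋃ n ∈ Finset.range N, E n ⊆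
      {z | (∀ l, l ≠ i → z i > z l) ∧ z i - z j ≤ ξ} := by
    simp only [iUnion_subset_iff]
    intro n _ z hz
    obtain ⟨⟨hzi, hzi'⟩, ⟨hzj, hzj'⟩, hzl⟩ := hE_mem n z hz
    refine ⟨fun l hl ↦ ?_, by linarith [hξ n]⟩
    rcases eq_or_ne l j with rfl | hlj
    · exact hzj'.trans_lt hzi
    · linarith [hzl l hl hlj, ha (Nat.zero_le n), (hs n).1]
  calc _ = ∑ n ∈ Finset.range N, (Measure.pi fun _ : ι ↦ P).real (E n) := by
        simp only [Finset.mul_sum, hE]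
    _ = (Measure.pi fun _ : ι ↦ P).real (⋃ n ∈ Finset.range N, E n) :=
        (measureReal_biUnion_finset hdisj fun n _ ↦
          MeasurableSet.univ_pi fun l ↦ by
            simp only [update_apply]; split_ifs <;> measurability).symm
    _ ≤ _ := measureReal_mono hsub

lemma cdf_pow_mul_sq_cdf_sub_div_le_measureReal [NullSingletonClass P] {i j : ι} (hij : i ≠ j)
    {ξ : ℝ} (hξ : 0 ≤ ξ) (m : ℝ) {N : ℕ} (hN : 0 < N) :
    cdf P m ^ (Fintype.card ι - 2) / 4 * ((cdf P (m + N * ξ) - cdf P m) ^ 2 / N) ≤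
      (Measure.pi fun _ : ι ↦ P).real
        {z | (∀ l, l ≠ i → z i > z l) ∧ z i - z j ≤ ξ} := by
  have hladder := cdf_pow_mul_sum_sq_cdf_sub_le_measureReal (P := P) hij
    (ξ := ξ) (a := fun n : ℕ ↦ m + n * ξ) (fun n n' h ↦ by dsimp only; gcongr)
    (fun n ↦ by push_cast; linarith) N
  simp only [CharP.cast_eq_zero, zero_mul, add_zero] at hladder
  refine le_trans ?_ hladder
  have := cdf_nonneg P m
  gcongr
  have hcs := sq_sub_le_mul_sum_sq_sub (fun n ↦ cdf P (m + n * ξ)) N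
  rw [Nat.cast_zero, zero_mul, add_zero] at hcs
  exact (div_le_iff₀' (Nat.cast_pos.2 hN)).2 hcs

end Ladder

end ProbabilityTheory

/-- **A strict maximum close to a given coordinate has non-negligible probability.**
Let `P` be a non-atomic probability distribution on `ℝ` with finite positive
standard deviation `σP`, let `k ≥ 2`, and let `Z₁, …, Z_k` be i.i.d. with law `P`
(modeled by the product measure on `Fin k → ℝ`). Then for any `ξ > 0`,
`Pr[Z₁ > Z_j for all j ∈ {2,…,k} and Z₁ - Z_k ≤ ξ]
  ≥ (1/(16k²)) · min {1/8, ξ/(64 σP √k)}`. -/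
theorem strict_max_close_prob_lower_bound
    (P : Measure ℝ) [IsProbabilityMeasure P]
    (hatom : ∀ x : ℝ, P {x} = 0)
    (hL2 : MemLp id 2 P)
    (σP : ℝ) (hσ : 0 < σP) (hvar : variance id P = σP ^ 2)
    (k : ℕ) (hk : 2 ≤ k)
    (ξ : ℝ) (hξ : 0 < ξ) :
    ((Measure.pi fun _ : Fin k => P)
        {z : Fin k → ℝ |
          (∀ j : Fin k, j ≠ ⟨0, by omega⟩ → z ⟨0, by omega⟩ > z j) ∧
          z ⟨0, by omega⟩ - z ⟨k - 1, by omega⟩ ≤ ξ}).toReal ≥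
      (1 / (16 * (k : ℝ) ^ 2)) * min (1 / 8) (ξ / (64 * σP * Real.sqrt k)) := by
  have : NullSingletonClass P := ⟨hatom⟩
  have hk1 : (1 : ℝ) ≤ k := by exact_mod_cast (by omega : 1 ≤ k)
  obtain ⟨m, hm, hgap⟩ := exists_cdf_eq_and_le_cdf_add_sub_of_variance_eq hL2 hσ hvar hk1
  set t := 4 * σP * √k / ξ
  set N := ⌈t⌉₊
  have hgapN : 1 / (4 * k) ≤ cdf P (m + N * ξ) - cdf P m := by
    have hN : 4 * σP * √k ≤ N * ξ := (div_le_iff₀ hξ).1 (Nat.le_ceil t)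
    linarith [monotone_cdf P (show m + 4 * σP * √k ≤ m + N * ξ by linarith)]
  have hpow : 1 / 2 ≤ cdf P m ^ (k - 2) :=
    (hm ▸ one_half_le_one_sub_inv_two_mul_pow k).trans
      (pow_le_pow_of_le_one (cdf_nonneg P m) (cdf_le_one P m) (Nat.sub_le k 2))
  have hladder := cdf_pow_mul_sq_cdf_sub_div_le_measureReal (P := P)
    (i := (⟨0, by omega⟩ : Fin k)) (j := ⟨k - 1, by omega⟩) (by simp [Fin.ext_iff]; omega)
    hξ.le m (Nat.ceil_pos.2 (by positivity) : 0 < N)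
  rw [Fintype.card_fin] at hladder
  calc (1 / (16 * (k : ℝ) ^ 2)) * min (1 / 8) (ξ / (64 * σP * Real.sqrt k))
      = 1 / (128 * k ^ 2) * min 1 (2 * t)⁻¹ := by
        rw [mul_min_of_nonneg _ _ (by positivity), mul_min_of_nonneg _ _ (by positivity)]
        congr 1
        · ring
        · simp only [t]; field_simp; ring
    _ ≤ 1 / (128 * k ^ 2) * (N : ℝ)⁻¹ := by
        gcongr; exact min_one_inv_two_mul_le_inv_ceil (by positivity)
    _ = 1 / 2 / 4 * ((1 / (4 * k)) ^ 2 / N) := by ring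
    _ ≤ cdf P m ^ (k - 2) / 4 * ((cdf P (m + N * ξ) - cdf P m) ^ 2 / N) := by gcongr
    _ ≤ _ := hladder
end
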